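/- arXiv:1409.7542 — 2 statements merged into one kernel-verified Lean document; each statement's English description precedes it below -/
import Mathlib

section
/- Let 𝒜, ℬ, 𝒞 be negative thin concurrent games and let σ : 𝒮 → 𝒜^⊥ ∥ ℬ and τ : 𝒯 → ℬ^⊥ ∥ 𝒞 be ∼-strategies that are negative and single-threaded (i.e. S and T are negative single-threaded esps). Then the composition τ ⊙ σ : 𝒯 ⊙ 𝒮 → 𝒜^⊥ ∥ 𝒞 is negative and single-threaded. -/
set_option autoImplicit false
set_option maxHeartbeats 1000000

universe u

/-- An event structure. -/
structure ES (E : Type u) where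
  le : E → E → Prop
  le_refl : ∀ e, le e e
  le_trans : ∀ {a b c}, le a b → le b c → le a c
  le_antisymm : ∀ {a b}, le a b → le b a → a = b
  Con : Set (Set E)
  con_empty : (∅ : Set E) ∈ Con
  causes_finite : ∀ e, {e' | le e' e}.Finite
  con_finite : ∀ X ∈ Con, Set.Finite X
  con_singleton : ∀ e, ({e} : Set E) ∈ Con
  con_mono : ∀ {X Y : Set E}, Y ⊆ X → X ∈ Con → Y ∈ Con
  con_extend : ∀ {X : Set E} {e e' : E}, X ∈ Con → le e e' → e' ∈ X → X ∪ {e} ∈ Con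

variable {E F G H : Type u}

/-- Configurations: finite (via `Con`), consistent, down-closed subsets. -/
def Config (A : ES E) (x : Set E) : Prop :=
  x ∈ A.Con ∧ ∀ ⦃e : E⦄, e ∈ x → ∀ ⦃e' : E⦄, A.le e' e → e' ∈ x

/-- Covering: `x —⊂ e`. -/
def Cov (A : ES E) (x : Set E) (e : E) : Prop :=
  Config A x ∧ e ∉ x ∧ Config A (insert e x)

def ESlt (A : ES E) (e e' : E) : Prop := A.le e e' ∧ e ≠ e'

/-- Immediate causality `e ⋖ e'`. -/
def Imm (A : ES E) (e e' : E) : Prop :=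
  ESlt A e e' ∧ ∀ e'', ESlt A e e'' → ESlt A e'' e' → False

/-- Total maps of event structures. -/
def IsMap (A : ES E) (B : ES F) (f : E → F) : Prop :=
  (∀ x, Config A x → Config B (f '' x)) ∧
  (∀ x, Config A x → ∀ e ∈ x, ∀ e' ∈ x, f e = f e' → e = e')

def Rigid (A : ES E) (B : ES F) (f : E → F) : Prop :=
  IsMap A B f ∧ ∀ e e', A.le e e' → B.le (f e) (f e')

def OpenMap (A : ES E) (B : ES F) (f : E → F) : Prop :=
  Rigid A B f ∧ ∀ x y, Config A x → Config B y → f '' x ⊆ y →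
    ∃ x', Config A x' ∧ x ⊆ x' ∧ f '' x' = y

def ConflictFree (A : ES E) : Prop := ∀ X : Set E, X.Finite → X ∈ A.Con

def IsMinimal (A : ES E) (e : E) : Prop := ∀ e', A.le e' e → e' = e

/-- Event structures with polarities; `true` is Player/positive, `false` is Opponent/negative. -/
structure ESP (E : Type u) extends ES E where
  pol : E → Bool

def ESP.dual (A : ESP E) : ESP E := { toES := A.toES, pol := fun e => !A.pol e }

def IsESPMap (A : ESP E) (B : ESP F) (f : E → F) : Prop :=
  IsMap A.toES B.toES f ∧ ∀ e, B.pol (f e) = A.pol e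

def NegativeESP (A : ESP E) : Prop := ∀ e, IsMinimal A.toES e → A.pol e = false

/-- Single-threaded event structures. -/
def SingleThreaded (A : ES E) : Prop :=
  (∀ e, ∃! m, A.le m e ∧ IsMinimal A m) ∧
  (∀ x e₁ e₂, Cov A x e₁ → Cov A x e₂ → ¬ Config A (insert e₁ (insert e₂ x)) →
    ∃ m, A.le m e₁ ∧ A.le m e₂)

/- ## Relations as bijections between configurations -/

abbrev Rel2 (E : Type u) := Set (E × E)

def rdom (θ : Rel2 E) : Set E := Prod.fst '' θ
def rran (θ : Rel2 E) : Set E := Prod.snd '' θ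
def relBij (θ : Rel2 E) : Prop := ∀ p ∈ θ, ∀ q ∈ θ, (p.1 = q.1 ↔ p.2 = q.2)
def relId (x : Set E) : Rel2 E := (fun e => (e, e)) '' x
def relInv (θ : Rel2 E) : Rel2 E := Prod.swap '' θ
def relComp (θ θ' : Rel2 E) : Rel2 E := {p | ∃ b, (p.1, b) ∈ θ ∧ (b, p.2) ∈ θ'}
def relRestrict (θ : Rel2 E) (x : Set E) : Rel2 E := {p ∈ θ | p.1 ∈ x}
def relMap (f : E → F) (θ : Rel2 E) : Rel2 F := (Prod.map f f) '' θ

/-- Isomorphism families (without the polarity requirement). -/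
def IsIsoFamily (A : ES E) (S : Set (Rel2 E)) : Prop :=
  (∀ θ ∈ S, relBij θ ∧ Config A (rdom θ) ∧ Config A (rran θ)) ∧
  (∀ x, Config A x → relId x ∈ S) ∧
  (∀ θ ∈ S, relInv θ ∈ S) ∧
  (∀ θ ∈ S, ∀ θ' ∈ S, rran θ = rdom θ' → relComp θ θ' ∈ S) ∧
  (∀ θ ∈ S, ∀ x, Config A x → x ⊆ rdom θ → relRestrict θ x ∈ S) ∧
  (∀ θ ∈ S, ∀ x', Config A x' → rdom θ ⊆ x' → ∃ θ' ∈ S, θ ⊆ θ' ∧ rdom θ' = x')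

/-- The members of the family are polarity-preserving. -/
def PolPres (A : ESP E) (S : Set (Rel2 E)) : Prop :=
  ∀ θ ∈ S, ∀ p ∈ θ, A.pol p.1 = A.pol p.2

def FamPres (SA : Set (Rel2 E)) (SB : Set (Rel2 F)) (f : E → F) : Prop :=
  ∀ θ ∈ SA, relMap f θ ∈ SB

/-- `f ∼ g` : the two maps are symmetric. -/
def SymMaps (A : ES E) (SB : Set (Rel2 F)) (f g : E → F) : Prop :=
  ∀ x, Config A x → {p : F × F | ∃ a ∈ x, p = (f a, g a)} ∈ SB

/-- `θ ⊆⁺ θ'`. -/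
def PosRelExt (A : ESP E) (θ θ' : Rel2 E) : Prop :=
  θ ⊆ θ' ∧ ∀ p ∈ θ', p ∉ θ → A.pol p.1 = true ∧ A.pol p.2 = true

/-- `θ ⊆⁻ θ'`. -/
def NegRelExt (A : ESP E) (θ θ' : Rel2 E) : Prop :=
  θ ⊆ θ' ∧ ∀ p ∈ θ', p ∉ θ → A.pol p.1 = false ∧ A.pol p.2 = false

/-- `x ⊆⁺ x'` for configurations. -/
def PosSetExt (A : ESP E) (x x' : Set E) : Prop :=
  x ⊆ x' ∧ ∀ e ∈ x', e ∉ x → A.pol e = true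

def Courteous (S : ESP E) (A : ESP F) (σ : E → F) : Prop :=
  ∀ s₁ s₂, Imm S.toES s₁ s₂ → (S.pol s₁ = true ∨ S.pol s₂ = false) →
    Imm A.toES (σ s₁) (σ s₂)

def Receptive (S : ESP E) (A : ESP F) (σ : E → F) : Prop :=
  ∀ x a, Config S.toES x → Cov A.toES (σ '' x) a → A.pol a = false →
    ∃! s, Cov S.toES x s ∧ σ s = a

def StrongReceptive (S : ESP E) (SS : Set (Rel2 E)) (A : ESP F) (SA : Set (Rel2 F))
    (σ : E → F) : Prop :=
  ∀ θ ∈ SS, ∀ a₁ a₂ : F, A.pol a₁ = false → A.pol a₂ = false →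
    (a₁, a₂) ∉ relMap σ θ → insert (a₁, a₂) (relMap σ θ) ∈ SA →
    ∃! st : E × E, insert st θ ∈ SS ∧ σ st.1 = a₁ ∧ σ st.2 = a₂

/-- Thin: two positive compatible extensions of a member of the family are compatible. -/
def ThinFam (A : ESP E) (S : Set (Rel2 E)) : Prop :=
  ∀ θ ∈ S, ∀ θ₁ ∈ S, ∀ θ₂ ∈ S, PosRelExt A θ θ₁ → PosRelExt A θ θ₂ →
    Config A.toES (rdom θ₁ ∪ rdom θ₂) → θ₁ ∪ θ₂ ∈ S

/-- Race-preserving essp (family-level). -/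
def RacePresFam (A : ESP E) (S : Set (Rel2 E)) : Prop :=
  ∀ θ ∈ S, ∀ θ₁ ∈ S, ∀ θ₂ ∈ S, PosRelExt A θ θ₁ → NegRelExt A θ θ₂ →
    Config A.toES (rdom θ₁ ∪ rdom θ₂) → θ₁ ∪ θ₂ ∈ S

/-- Existence of receptive thin sub-symmetries of `A` and of `A^⊥`. -/
def HasThinReceptiveSubs (A : ESP E) (SA : Set (Rel2 E)) : Prop :=
  (∃ Sp ⊆ SA, IsIsoFamily A.toES Sp ∧
    (∀ θ ∈ Sp, ∀ θ' ∈ SA, NegRelExt A θ θ' → θ' ∈ Sp) ∧ ThinFam A Sp) ∧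
  (∃ Sm ⊆ SA, IsIsoFamily A.toES Sm ∧
    (∀ θ ∈ Sm, ∀ θ' ∈ SA, NegRelExt A.dual θ θ' → θ' ∈ Sm) ∧ ThinFam A.dual Sm)

/-- Thin concurrent games (family-level presentation). -/
def IsTCG (A : ESP E) (SA : Set (Rel2 E)) : Prop :=
  IsIsoFamily A.toES SA ∧ PolPres A SA ∧ RacePresFam A SA ∧ HasThinReceptiveSubs A SA

/-- ∼-strategies. -/
def IsSimStrategy (S : ESP E) (SS : Set (Rel2 E)) (A : ESP F) (SA : Set (Rel2 F))
    (σ : E → F) : Prop :=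
  IsESPMap S A σ ∧ FamPres SS SA σ ∧ IsIsoFamily S.toES SS ∧ PolPres S SS ∧
  Courteous S A σ ∧ StrongReceptive S SS A SA σ ∧ ThinFam S SS

/-- Weak equivalence of ∼-strategies on a common essp. -/
def WeakEquiv {S T GE : Type u} (PS : ESP S) (SS : Set (Rel2 S)) (PT : ESP T)
    (ST : Set (Rel2 T)) (SG : Set (Rel2 GE)) (σ : S → GE) (τ : T → GE) : Prop :=
  ∃ f : S → T, ∃ g : T → S,
    IsESPMap PS PT f ∧ FamPres SS ST f ∧ IsESPMap PT PS g ∧ FamPres ST SS g ∧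
    SymMaps PT.toES ST (f ∘ g) id ∧ SymMaps PS.toES SS (g ∘ f) id ∧
    SymMaps PS.toES SG (τ ∘ f) σ ∧ SymMaps PT.toES SG (σ ∘ g) τ

/- ## Stable families, primes, products, pullbacks -/

def FamLe (Fam : Set (Set E)) (x : Set E) (e e' : E) : Prop :=
  ∀ y ∈ Fam, y ⊆ x → e' ∈ y → e ∈ y

def FamPrime (Fam : Set (Set E)) (x : Set E) (e : E) : Set E :=
  {e' ∈ x | FamLe Fam x e' e}

def IsPrime (Fam : Set (Set E)) (p : Set E) : Prop :=
  ∃ x ∈ Fam, ∃ e ∈ x, p = FamPrime Fam x e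

/-- `e` is the generating (top) event of the prime `p`. -/
def PrRep (Fam : Set (Set E)) (p : Set E) (e : E) : Prop :=
  ∃ x ∈ Fam, e ∈ x ∧ p = FamPrime Fam x e

def PrimeLt (p q : Set E) : Prop := p ⊆ q ∧ p ≠ q

/-- Immediate causality in `Pr(Fam)`. -/
def PrImm (Fam : Set (Set E)) (p q : Set E) : Prop :=
  IsPrime Fam p ∧ IsPrime Fam q ∧ PrimeLt p q ∧
  ∀ r, IsPrime Fam r → PrimeLt p r → PrimeLt r q → False

/-- Configurations of `Pr(Fam)`. -/
def PrConfig (Fam : Set (Set E)) (z : Set (Set E)) : Prop :=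
  z.Finite ∧ (∀ p ∈ z, IsPrime Fam p) ∧
  (∀ p ∈ z, ∀ q, IsPrime Fam q → q ⊆ p → q ∈ z) ∧ ⋃₀ z ∈ Fam

/-- The product stable family `C(A) × C(B)`. -/
def ProdFam (A : ES E) (B : ES F) : Set (Set (E × F)) :=
  {x | x.Finite ∧ Config A (Prod.fst '' x) ∧ Config B (Prod.snd '' x) ∧
    (∀ p ∈ x, ∀ q ∈ x, p.1 = q.1 → p = q) ∧
    (∀ p ∈ x, ∀ q ∈ x, p.2 = q.2 → p = q) ∧
    (∀ p ∈ x, ∀ q ∈ x, p ≠ q → ∃ y ⊆ x,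
      Config A (Prod.fst '' y) ∧ Config B (Prod.snd '' y) ∧ (p ∈ y ↔ q ∉ y))}

/-- The stable family `(C(A) × C(B)) ↾ R` defining the pullback `A ⊛ B` of `f` and `g`. -/
def PbFam (A : ES E) (B : ES F) (f : E → G) (g : F → G) : Set (Set (E × F)) :=
  {x | x ∈ ProdFam A B ∧ ∀ p ∈ x, f p.1 = g p.2}

/- ## Secured bijections -/

def SecStep (A : ES E) (B : ES F) (θ : Set (E × F)) (p q : E × F) : Prop :=
  p ∈ θ ∧ q ∈ θ ∧ (A.le p.1 q.1 ∨ B.le p.2 q.2)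

def SecuredBij (A : ES E) (B : ES F) (f : E → G) (g : F → G) (θ : Set (E × F)) : Prop :=
  Config A (Prod.fst '' θ) ∧ Config B (Prod.snd '' θ) ∧
  (∀ p ∈ θ, ∀ q ∈ θ, (p.1 = q.1 ↔ p.2 = q.2)) ∧
  (∀ p ∈ θ, f p.1 = g p.2) ∧
  (∀ p q, Relation.TransGen (SecStep A B θ) p q → Relation.TransGen (SecStep A B θ) q p → p = q)

/- ## Parallel composition -/

def IsParES (A : ES E) (B : ES F) (P : ES (E ⊕ F)) : Prop :=
  (∀ e e', P.le e e' ↔ Sum.LiftRel A.le B.le e e') ∧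
  (∀ X, X ∈ P.Con ↔ X.Finite ∧ (Sum.inl ⁻¹' X) ∈ A.Con ∧ (Sum.inr ⁻¹' X) ∈ B.Con)

def IsParESP (A : ESP E) (B : ESP F) (P : ESP (E ⊕ F)) : Prop :=
  IsParES A.toES B.toES P.toES ∧
  (∀ a, P.pol (Sum.inl a) = A.pol a) ∧ (∀ b, P.pol (Sum.inr b) = B.pol b)

def parFam (SA : Set (Rel2 E)) (SB : Set (Rel2 F)) : Set (Rel2 (E ⊕ F)) :=
  {θ | ∃ θA ∈ SA, ∃ θB ∈ SB, θ = relMap Sum.inl θA ∪ relMap Sum.inr θB}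

/- ## Copycat -/

def ccPol (A : ESP E) (p : Bool × E) : Bool := cond p.1 (A.pol p.2) (!A.pol p.2)

def ccBase (A : ESP E) (p q : Bool × E) : Prop :=
  (p.1 = q.1 ∧ A.le p.2 q.2) ∨ (p.2 = q.2 ∧ p.1 ≠ q.1 ∧ ccPol A q = true)

def ccLe (A : ESP E) : Bool × E → Bool × E → Prop := Relation.ReflTransGen (ccBase A)

def ccDcl (A : ESP E) (X : Set (Bool × E)) : Set (Bool × E) := {p | ∃ q ∈ X, ccLe A p q}

def IsCopycatOf (A : ESP E) (CA : ESP (Bool × E)) : Prop :=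
  (∀ p q, CA.le p q ↔ ccLe A p q) ∧
  (∀ X, X ∈ CA.Con ↔ X.Finite ∧
    {a | (false, a) ∈ ccDcl A X} ∈ A.Con ∧ {a | (true, a) ∈ ccDcl A X} ∈ A.Con) ∧
  (∀ p, CA.pol p = ccPol A p)

def ccMap (f : E → F) : Bool × E → Bool × F := Prod.map id f

def ccToGame : Bool × E → E ⊕ E := fun p => cond p.1 (Sum.inr p.2) (Sum.inl p.2)

/- ## Symmetry presented as spans -/

def famOf (Et : ES F) (l r : F → E) : Set (Rel2 E) :=
  {θ | ∃ x, Config Et x ∧ θ = {p | ∃ aa ∈ x, p = (l aa, r aa)}}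

def IsSymSpanES (A : ES E) (Et : ES F) (l r : F → E) : Prop :=
  OpenMap Et A l ∧ OpenMap Et A r ∧
  (∀ aa aa', l aa = l aa' → r aa = r aa' → aa = aa') ∧
  (∀ x, Config A x → relId x ∈ famOf Et l r) ∧
  (∀ θ ∈ famOf Et l r, relInv θ ∈ famOf Et l r) ∧
  (∀ θ ∈ famOf Et l r, ∀ θ' ∈ famOf Et l r, rran θ = rdom θ' → relComp θ θ' ∈ famOf Et l r)

def IsSymSpanESP (A : ESP E) (Et : ESP F) (l r : F → E) : Prop :=
  IsSymSpanES A.toES Et.toES l r ∧ IsESPMap Et A l ∧ IsESPMap Et A r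

def MapPresRaces (S : ESP E) (A : ESP F) (f : E → F) : Prop :=
  ∀ x e₁ e₂, Cov S.toES x e₁ → Cov S.toES x e₂ →
    S.pol e₁ = false → S.pol e₂ = true →
    ¬ Config S.toES (insert e₁ (insert e₂ x)) →
    ¬ Config A.toES (insert (f e₁) (insert (f e₂) (f '' x)))

def ReflPosCompat (St : ESP F) (S : ES E) (l : F → E) : Prop :=
  ∀ x x₁ x₂, Config St.toES x → Config St.toES x₁ → Config St.toES x₂ →
    x ⊆ x₁ → x ⊆ x₂ →
    (∀ e ∈ x₁, e ∉ x → St.pol e = true) → (∀ e ∈ x₂, e ∉ x → St.pol e = true) →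
    Config S (l '' x₁ ∪ l '' x₂) → Config St.toES (x₁ ∪ x₂)

/- ## Higher symmetry -/

/-- The higher isomorphism family of an essp given by its family `SA`, at the level of
pairs of events: members correspond to commuting squares `φ' ∘ θ = θ' ∘ φ`. -/
def HigherFam (SA : Set (Rel2 E)) : Set (Rel2 (E × E)) :=
  {Φ | ∃ θ ∈ SA, ∃ θ' ∈ SA, ∃ φ ∈ SA, ∃ φ' ∈ SA,
    rdom φ = rdom θ ∧ rdom φ' = rran θ ∧ rran φ = rdom θ' ∧ rran φ' = rran θ' ∧
    (∀ a b c d, (a, b) ∈ θ → (a, c) ∈ φ → (b, d) ∈ φ' → (c, d) ∈ θ') ∧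
    Φ = {P | ∃ a b c d, (a, b) ∈ θ ∧ (a, c) ∈ φ ∧ (b, d) ∈ φ' ∧ P = ((a, b), (c, d))}}

/-- The higher isomorphism family, transported to the events of `Ã = Pr(SA)`,
i.e. primes of the stable family `SA`. -/
def LiftFam (SA : Set (Rel2 E)) : Set (Rel2 {p : Rel2 E // IsPrime SA p}) :=
  {Θ | ∃ θ ∈ SA, ∃ θ' ∈ SA, ∃ φ ∈ SA, ∃ φ' ∈ SA,
    rdom φ = rdom θ ∧ rdom φ' = rran θ ∧ rran φ = rdom θ' ∧ rran φ' = rran θ' ∧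
    (∀ a b c d, (a, b) ∈ θ → (a, c) ∈ φ → (b, d) ∈ φ' → (c, d) ∈ θ') ∧
    Θ = {P | ∃ a b c d, (a, b) ∈ θ ∧ (a, c) ∈ φ ∧ (b, d) ∈ φ' ∧
          P.1.1 = FamPrime SA θ (a, b) ∧ P.2.1 = FamPrime SA θ' (c, d)}}

/- ## Pullbacks as universal properties -/

def IsPullbackES {A B C P : Type u} (EP : ES P) (EA : ES A) (EB : ES B) (EC : ES C)
    (Pi1 : P → A) (Pi2 : P → B) (f : A → C) (g : B → C) : Prop :=
  IsMap EP EA Pi1 ∧ IsMap EP EB Pi2 ∧ f ∘ Pi1 = g ∘ Pi2 ∧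
  ∀ {X : Type u} (EX : ES X) (h₁ : X → A) (h₂ : X → B),
    IsMap EX EA h₁ → IsMap EX EB h₂ → f ∘ h₁ = g ∘ h₂ →
    ∃! h : X → P, IsMap EX EP h ∧ Pi1 ∘ h = h₁ ∧ Pi2 ∘ h = h₂

def IsPullbackESP {A B C P : Type u} (EP : ESP P) (EA : ESP A) (EB : ESP B) (EC : ESP C)
    (Pi1 : P → A) (Pi2 : P → B) (f : A → C) (g : B → C) : Prop :=
  IsESPMap EP EA Pi1 ∧ IsESPMap EP EB Pi2 ∧ f ∘ Pi1 = g ∘ Pi2 ∧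
  ∀ {X : Type u} (EX : ESP X) (h₁ : X → A) (h₂ : X → B),
    IsESPMap EX EA h₁ → IsESPMap EX EB h₂ → f ∘ h₁ = g ∘ h₂ →
    ∃! h : X → P, IsESPMap EX EP h ∧ Pi1 ∘ h = h₁ ∧ Pi2 ∘ h = h₂

/- ## Composition of strategies -/

def compLeft {S GA GB GC : Type u} (σ : S → GA ⊕ GB) : S ⊕ GC → (GA ⊕ GB) ⊕ GC :=
  Sum.map σ id

def compRight {T GA GB GC : Type u} (τ : T → GB ⊕ GC) : GA ⊕ T → (GA ⊕ GB) ⊕ GC :=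
  Sum.elim (fun a => Sum.inl (Sum.inl a))
    (fun t => Sum.elim (fun b => Sum.inl (Sum.inr b)) (fun c => Sum.inr c) (τ t))

def outAC {A B C : Type u} : (A ⊕ B) ⊕ C → Option (A ⊕ C) :=
  Sum.elim (Sum.elim (fun a => some (Sum.inl a)) (fun _ => none)) (fun c => some (Sum.inr c))

/-- Visible events of the interaction. -/
def VisE {S T GA GB GC : Type u} (σ : S → GA ⊕ GB) (e : (S ⊕ GC) × (GA ⊕ T)) : Prop :=
  (outAC (compLeft σ e.1)).isSome = true

/-- Visible primes of the interaction. -/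
def VisP {S T GA GB GC : Type u} (Fam : Set (Set ((S ⊕ GC) × (GA ⊕ T))))
    (σ : S → GA ⊕ GB) (p : Set ((S ⊕ GC) × (GA ⊕ T))) : Prop :=
  ∃ e, PrRep Fam p e ∧ VisE σ e

/-- The underlying relation of a bijection between configurations of `Pr(Fam)`. -/
def relUnder {P : Type u} (Fam : Set (Set P)) (Θ : Rel2 (Set P)) :
    Rel2 P :=
  {ee | ∃ pq ∈ Θ, PrRep Fam pq.1 ee.1 ∧ PrRep Fam pq.2 ee.2}

/-- The isomorphism family of the pullback `Pr(Fam)` of two ∼-strategies,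
characterised via the projections. -/
def PbSymFam {A B : Type u} (Fam : Set (Set (A × B))) (S1 : Set (Rel2 A))
    (S2 : Set (Rel2 B)) : Set (Rel2 (Set (A × B))) :=
  {Θ | relBij Θ ∧ PrConfig Fam (rdom Θ) ∧ PrConfig Fam (rran Θ) ∧
    relMap Prod.fst (relUnder Fam Θ) ∈ S1 ∧ relMap Prod.snd (relUnder Fam Θ) ∈ S2}

/-- A witness for the concrete composition `τ ⊙ σ` of strategies. -/
structure CompWitness {S T GA GB GC : Type u} (PS : ESP S) (PT : ESP T)
    (PA : ESP GA) (PC : ESP GC) (σ : S → GA ⊕ GB) (τ : T → GB ⊕ GC) where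
  L : ES (S ⊕ GC)
  R : ES (GA ⊕ T)
  hL : IsParES PS.toES PC.toES L
  hR : IsParES PA.toES PT.toES R
  Comp : ESP {p : Set ((S ⊕ GC) × (GA ⊕ T)) //
    VisP (PbFam L R (compLeft σ) (compRight τ)) σ p}
  hle : ∀ p q, Comp.le p q ↔ p.1 ⊆ q.1
  hcon : ∀ X, X ∈ Comp.Con ↔
    X.Finite ∧ ⋃₀ (Subtype.val '' X) ∈ PbFam L R (compLeft σ) (compRight τ)
  co : {p : Set ((S ⊕ GC) × (GA ⊕ T)) //
    VisP (PbFam L R (compLeft σ) (compRight τ)) σ p} → GA ⊕ GC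
  hco : ∀ p e, PrRep (PbFam L R (compLeft σ) (compRight τ)) p.1 e →
    outAC (compLeft σ e.1) = some (co p)
  hpol : ∀ p, Comp.pol p = Sum.elim (fun a => !PA.pol a) (fun c => PC.pol c) (co p)

/-- The isomorphism family of the composition: restriction to visible primes of the
family of the interaction. -/
def cfam {S T GA GB GC : Type u} {PS : ESP S} {PT : ESP T} {PA : ESP GA} {PC : ESP GC}
    {σ : S → GA ⊕ GB} {τ : T → GB ⊕ GC}
    (SS : Set (Rel2 S)) (ST : Set (Rel2 T)) (SA : Set (Rel2 GA)) (SC : Set (Rel2 GC))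
    (w : CompWitness PS PT PA PC σ τ) :
    Set (Rel2 {p : Set ((S ⊕ GC) × (GA ⊕ T)) //
      VisP (PbFam w.L w.R (compLeft σ) (compRight τ)) σ p}) :=
  {Θ | ∃ Φ ∈ PbSymFam (PbFam w.L w.R (compLeft σ) (compRight τ))
      (parFam SS SC) (parFam SA ST),
    relMap Subtype.val Θ =
      {pq ∈ Φ | VisP (PbFam w.L w.R (compLeft σ) (compRight τ)) σ pq.1 ∧
                VisP (PbFam w.L w.R (compLeft σ) (compRight τ)) σ pq.2}}
/- ## Auxiliary lemmas -/

open Relation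

section AuxES

variable {E F : Type u}

lemma config_inter {A : ES E} {s t : Set E} (hs : Config A s) (ht : Config A t) :
    Config A (s ∩ t) :=
  ⟨A.con_mono Set.inter_subset_left hs.1,
   fun e he e' hle => ⟨hs.2 he.1 hle, ht.2 he.2 hle⟩⟩

lemma downset_con (A : ES E) (e : E) : {e' | A.le e' e} ∈ A.Con := by
  have hfin := A.causes_finite e
  have h : insert e {e' | A.le e' e} ∈ A.Con := by
    refine Set.Finite.induction_on_subset (motive := fun Z _ => insert e Z ∈ A.Con) _ hfin ?_ ?_
    · simpa using A.con_singleton e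
    · intro a Z haS _ _ ih
      have h2 : (insert e Z) ∪ {a} ∈ A.Con :=
        A.con_extend ih haS (Set.mem_insert e Z)
      have heq : (insert e Z) ∪ {a} = insert e (insert a Z) := by
        ext y; simp; tauto
      rwa [heq] at h2
  have he : e ∈ {e' | A.le e' e} := A.le_refl e
  rwa [Set.insert_eq_self.mpr he] at h

lemma downset_config (A : ES E) (e : E) : Config A {e' | A.le e' e} :=
  ⟨downset_con A e, fun a ha b hb => A.le_trans hb ha⟩

lemma config_singleton_of_minimal {A : ES E} {e : E} (he : IsMinimal A e) :
    Config A ({e} : Set E) :=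
  ⟨A.con_singleton e, fun a ha b hb => by
    rcases ha with rfl
    exact he b hb ▸ rfl⟩

lemma map_min {A : ES E} {B : ES F} {f : E → F} (hf : IsMap A B f) {e : E}
    (he : IsMinimal A e) : IsMinimal B (f e) := by
  have h1 : Config B (f '' {e}) := hf.1 _ (config_singleton_of_minimal he)
  intro y hy
  have : y ∈ f '' {e} := h1.2 ⟨e, rfl, rfl⟩ hy
  rcases this with ⟨z, hz, rfl⟩
  rcases hz with rfl
  rfl

/-- Existence of a maximal element above a given element in a finite set. -/
lemma exists_maximal_le (A : ES E) {Y : Set E} (hfin : Y.Finite) :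
    ∀ y₀ ∈ Y, ∃ m ∈ Y, A.le y₀ m ∧ ∀ e ∈ Y, A.le m e → m = e := by
  have main : ∀ n : ℕ, ∀ y₀ ∈ Y, ({e ∈ Y | A.le y₀ e}).ncard ≤ n →
      ∃ m ∈ Y, A.le y₀ m ∧ ∀ e ∈ Y, A.le m e → m = e := by
    intro n
    induction n with
    | zero =>
      intro y₀ hy₀ hcard
      exfalso
      have hne : ({e ∈ Y | A.le y₀ e}).Nonempty := ⟨y₀, hy₀, A.le_refl y₀⟩
      have hf : ({e ∈ Y | A.le y₀ e}).Finite := hfin.subset (fun z hz => hz.1)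
      have := (Set.ncard_pos hf).mpr hne
      omega
    | succ n ih =>
      intro y₀ hy₀ hcard
      by_cases hmax : ∀ e ∈ Y, A.le y₀ e → y₀ = e
      · exact ⟨y₀, hy₀, A.le_refl y₀, hmax⟩
      · push_neg at hmax
        obtain ⟨y₁, hy₁, hle₁, hne₁⟩ := hmax
        have hsub : {e ∈ Y | A.le y₁ e} ⊆ {e ∈ Y | A.le y₀ e} :=
          fun z hz => ⟨hz.1, A.le_trans hle₁ hz.2⟩
        have hss : {e ∈ Y | A.le y₁ e} ⊂ {e ∈ Y | A.le y₀ e} := by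
          refine ⟨hsub, fun h => ?_⟩
          have : y₀ ∈ {e ∈ Y | A.le y₁ e} := h ⟨hy₀, A.le_refl y₀⟩
          exact hne₁ (A.le_antisymm hle₁ this.2)
        have hf : ({e ∈ Y | A.le y₀ e}).Finite := hfin.subset (fun z hz => hz.1)
        have hlt := Set.ncard_lt_ncard hss hf
        obtain ⟨m, hm, hlem, hmmax⟩ := ih y₁ hy₁ (by omega)
        exact ⟨m, hm, A.le_trans hle₁ hlem, hmmax⟩
  intro y₀ hy₀
  exact main _ y₀ hy₀ le_rfl

lemma exists_imm_pred (A : ES E) {e : E} (h : ¬ IsMinimal A e) : ∃ e', Imm A e' e := by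
  have : ∃ e', ESlt A e' e := by
    unfold IsMinimal at h
    push_neg at h
    obtain ⟨e', h1, h2⟩ := h
    exact ⟨e', h1, h2⟩
  obtain ⟨e₀, he₀⟩ := this
  have hfin : ({e' | ESlt A e' e}).Finite :=
    (A.causes_finite e).subset (fun z hz => hz.1)
  obtain ⟨m, hm, _, hmax⟩ := exists_maximal_le A hfin e₀ he₀
  refine ⟨m, hm, fun e'' h1 h2 => ?_⟩
  exact h1.2 (hmax e'' h2 h1.1)

/-- Cross conflict lemma: two configurations whose union is inconsistent yield a
pair of covers witnessing a minimal conflict across the two sides. -/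
lemma cross_conflict (A : ES E) {u v : Set E} (hu : Config A u) (hv : Config A v)
    (hcon : u ∪ v ∉ A.Con) :
    ∃ w a b, Cov A w a ∧ Cov A w b ∧ ¬ Config A (insert a (insert b w)) ∧
      a ∈ u ∧ a ∉ v ∧ b ∈ v ∧ b ∉ u := by
  classical
  have hufin : u.Finite := A.con_finite u hu.1
  have hvfin : v.Finite := A.con_finite v hv.1
  have huv : (u ∪ v).Finite := hufin.union hvfin
  -- family of down-closed inconsistent subsets
  set N : Set (Set E) := {Y | Y ⊆ u ∪ v ∧ (∀ e ∈ Y, ∀ e', A.le e' e → e' ∈ Y) ∧ Y ∉ A.Con}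
    with hN
  have hmemN : (u ∪ v) ∈ N := by
    refine ⟨le_rfl, ?_, hcon⟩
    rintro e (he | he) e' hle
    · exact Or.inl (hu.2 he hle)
    · exact Or.inr (hv.2 he hle)
  -- minimal cardinality member
  have hnatne : ∃ n, n ∈ Set.ncard '' N := ⟨(u ∪ v).ncard, ⟨u ∪ v, hmemN, rfl⟩⟩
  obtain ⟨Y, hYN, hYcard⟩ := Nat.sInf_mem hnatne
  have hYmin : ∀ Z ∈ N, Y.ncard ≤ Z.ncard := by
    intro Z hZ
    rw [hYcard]
    exact Nat.sInf_le ⟨Z, hZ, rfl⟩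
  obtain ⟨hYsub, hYdc, hYcon⟩ := hYN
  have hYfin : Y.Finite := huv.subset hYsub
  -- maximal elements outside v resp. outside u
  have hmaxout : ∀ s : Set E, Config A s → ∃ m ∈ Y, m ∉ s ∧ ∀ e ∈ Y, A.le m e → m = e := by
    intro s hs
    by_contra hcontra
    push_neg at hcontra
    have : Y ⊆ s := by
      intro y hy
      obtain ⟨m, hm, hym, hmmax⟩ := exists_maximal_le A hYfin y hy
      have hms : m ∈ s := by
        by_contra hms
        obtain ⟨e, he, hle, hne⟩ := hcontra m hm hms
        exact hne (hmmax e he hle)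
      exact hs.2 hms hym
    exact hYcon (A.con_mono this hs.1)
  obtain ⟨a, haY, hav, hamax⟩ := hmaxout v hv
  obtain ⟨b, hbY, hbu, hbmax⟩ := hmaxout u hu
  have hau : a ∈ u := by rcases hYsub haY with h | h; exact h; exact absurd h hav
  have hbv : b ∈ v := by rcases hYsub hbY with h | h; exact absurd h hbu; exact h
  have hab : a ≠ b := fun h => hbu (h ▸ hau)
  -- w := Y \ {a, b}
  set W : Set E := Y \ {a, b} with hW
  have hWsub : W ⊆ u ∪ v := fun z hz => hYsub hz.1
  have notmem_of_max : ∀ {m}, m ∈ Y → (∀ e ∈ Y, A.le m e → m = e) → m ∉ ({a,b} : Set E) →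
      False ∨ True := fun _ _ _ => Or.inr trivial
  have hWdc : ∀ e ∈ W, ∀ e', A.le e' e → e' ∈ W := by
    rintro e ⟨heY, heab⟩ e' hle
    have he'Y : e' ∈ Y := hYdc e heY e' hle
    refine ⟨he'Y, ?_⟩
    rintro (rfl | rfl)
    · rcases hamax e heY hle with rfl
      exact heab (Set.mem_insert _ _)
    · rcases hbmax e heY hle with rfl
      exact heab (Set.mem_insert_of_mem _ rfl)
  have hprop : ∀ (Z : Set E), Z ⊆ u ∪ v → (∀ e ∈ Z, ∀ e', A.le e' e → e' ∈ Z) →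
      Z ⊂ Y → Z ∈ A.Con := by
    intro Z h1 h2 h3
    by_contra hZcon
    have : Y.ncard ≤ Z.ncard := hYmin Z ⟨h1, h2, hZcon⟩
    have := Set.ncard_lt_ncard h3 hYfin
    omega
  have hWssY : W ⊂ Y := by
    refine ⟨Set.diff_subset, fun h => ?_⟩
    have : a ∈ W := h haY
    exact this.2 (Or.inl rfl)
  have hWcon : W ∈ A.Con := hprop W hWsub hWdc hWssY
  have hWcfg : Config A W := ⟨hWcon, hWdc⟩
  -- insert a W = Y \ {b}
  have hins : ∀ {p q : E}, p ∈ Y → p ∉ ({a,b} : Set E) → True := fun _ _ => trivial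
  have haW : a ∉ W := fun h => h.2 (Or.inl rfl)
  have hbW : b ∉ W := fun h => h.2 (Or.inr rfl)
  have hYab : insert a (insert b W) = Y := by
    ext y
    constructor
    · rintro (rfl | rfl | hy)
      · exact haY
      · exact hbY
      · exact hy.1
    · intro hy
      by_cases h1 : y = a
      · exact Or.inl h1
      by_cases h2 : y = b
      · exact Or.inr (Or.inl h2)
      · exact Or.inr (Or.inr ⟨hy, by rintro (rfl | rfl) <;> simp_all⟩)
  have hinsa : insert a W = Y \ {b} := by
    ext y
    constructor
    · rintro (rfl | hy)
      · exact ⟨haY, by simpa using hab⟩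
      · exact ⟨hy.1, fun h => hy.2 (Or.inr h)⟩
    · rintro ⟨hyY, hyb⟩
      by_cases h1 : y = a
      · exact Or.inl h1
      · exact Or.inr ⟨hyY, by
          rintro (rfl | rfl)
          · exact h1 rfl
          · exact hyb rfl⟩
  have hinsb : insert b W = Y \ {a} := by
    ext y
    constructor
    · rintro (rfl | hy)
      · exact ⟨hbY, by simpa using fun h => hab h.symm⟩
      · exact ⟨hy.1, fun h => hy.2 (Or.inl h)⟩
    · rintro ⟨hyY, hya⟩
      by_cases h1 : y = b
      · exact Or.inl h1
      · exact Or.inr ⟨hyY, by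
          rintro (rfl | rfl)
          · exact hya rfl
          · exact h1 rfl⟩
  have hdcb : ∀ e ∈ Y \ {a}, ∀ e', A.le e' e → e' ∈ Y \ {a} := by
    rintro e ⟨heY, hea⟩ e' hle
    refine ⟨hYdc e heY e' hle, ?_⟩
    rintro rfl
    rcases hamax e heY hle with rfl
    exact hea rfl
  have hdca : ∀ e ∈ Y \ {b}, ∀ e', A.le e' e → e' ∈ Y \ {b} := by
    rintro e ⟨heY, heb⟩ e' hle
    refine ⟨hYdc e heY e' hle, ?_⟩
    rintro rfl
    rcases hbmax e heY hle with rfl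
    exact heb rfl
  have hconA : insert a W ∈ A.Con := by
    rw [hinsa]
    refine hprop _ (fun z hz => hYsub hz.1) hdca ⟨Set.diff_subset, fun h => ?_⟩
    exact ((h hbY).2 rfl)
  have hconB : insert b W ∈ A.Con := by
    rw [hinsb]
    refine hprop _ (fun z hz => hYsub hz.1) hdcb ⟨Set.diff_subset, fun h => ?_⟩
    exact ((h haY).2 rfl)
  refine ⟨W, a, b, ⟨hWcfg, haW, hconA, ?_⟩, ⟨hWcfg, hbW, hconB, ?_⟩, ?_, hau, hav, hbv, hbu⟩
  · rw [hinsa]; exact hdca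
  · rw [hinsb]; exact hdcb
  · intro hcfg
    rw [hYab] at hcfg
    exact hYcon hcfg.1

lemma parES_le_inl {A : ES E} {B : ES F} {P : ES (E ⊕ F)} (h : IsParES A B P)
    {a a' : E} : P.le (Sum.inl a) (Sum.inl a') ↔ A.le a a' := by
  rw [h.1]; constructor
  · intro hh; cases hh; assumption
  · exact fun hh => Sum.LiftRel.inl hh

lemma parES_le_inr {A : ES E} {B : ES F} {P : ES (E ⊕ F)} (h : IsParES A B P)
    {b b' : F} : P.le (Sum.inr b) (Sum.inr b') ↔ B.le b b' := by
  rw [h.1]; constructor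
  · intro hh; cases hh; assumption
  · exact fun hh => Sum.LiftRel.inr hh

lemma parES_config_components {A : ES E} {B : ES F} {P : ES (E ⊕ F)} (h : IsParES A B P)
    {X : Set (E ⊕ F)} (hX : Config P X) :
    Config A (Sum.inl ⁻¹' X) ∧ Config B (Sum.inr ⁻¹' X) := by
  have hcon := (h.2 X).mp hX.1
  constructor
  · exact ⟨hcon.2.1, fun a ha a' hle => hX.2 ha ((parES_le_inl h).mpr hle)⟩
  · exact ⟨hcon.2.2, fun b hb b' hle => hX.2 hb ((parES_le_inr h).mpr hle)⟩

end AuxES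

section AuxPb

variable {SC AT G : Type u} {L : ES SC} {R : ES AT} {f : SC → G} {g : AT → G}

lemma pb_finite {x : Set (SC × AT)} (hx : x ∈ PbFam L R f g) : x.Finite := hx.1.1

lemma pb_cfg1 {x : Set (SC × AT)} (hx : x ∈ PbFam L R f g) : Config L (Prod.fst '' x) :=
  hx.1.2.1

lemma pb_cfg2 {x : Set (SC × AT)} (hx : x ∈ PbFam L R f g) : Config R (Prod.snd '' x) :=
  hx.1.2.2.1

lemma pb_inj1 {x : Set (SC × AT)} (hx : x ∈ PbFam L R f g) :
    ∀ p ∈ x, ∀ q ∈ x, p.1 = q.1 → p = q := hx.1.2.2.2.1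

lemma pb_inj2 {x : Set (SC × AT)} (hx : x ∈ PbFam L R f g) :
    ∀ p ∈ x, ∀ q ∈ x, p.2 = q.2 → p = q := hx.1.2.2.2.2.1

lemma pb_sep {x : Set (SC × AT)} (hx : x ∈ PbFam L R f g) :
    ∀ p ∈ x, ∀ q ∈ x, p ≠ q → ∃ y ⊆ x,
      Config L (Prod.fst '' y) ∧ Config R (Prod.snd '' y) ∧ (p ∈ y ↔ q ∉ y) :=
  hx.1.2.2.2.2.2

lemma pb_match {x : Set (SC × AT)} (hx : x ∈ PbFam L R f g) :
    ∀ p ∈ x, f p.1 = g p.2 := hx.2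

lemma img1_inter {x y z : Set (SC × AT)} (hx : x ∈ PbFam L R f g)
    (hy : y ⊆ x) (hz : z ⊆ x) : Prod.fst '' (y ∩ z) = (Prod.fst '' y) ∩ (Prod.fst '' z) := by
  apply Set.Subset.antisymm
  · rintro a ⟨p, hp, rfl⟩
    exact ⟨⟨p, hp.1, rfl⟩, ⟨p, hp.2, rfl⟩⟩
  · rintro a ⟨⟨p, hp, rfl⟩, ⟨q, hq, hqa⟩⟩
    have : q = p := pb_inj1 hx q (hz hq) p (hy hp) hqa
    subst this
    exact ⟨q, ⟨hp, hq⟩, rfl⟩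

lemma img2_inter {x y z : Set (SC × AT)} (hx : x ∈ PbFam L R f g)
    (hy : y ⊆ x) (hz : z ⊆ x) : Prod.snd '' (y ∩ z) = (Prod.snd '' y) ∩ (Prod.snd '' z) := by
  apply Set.Subset.antisymm
  · rintro a ⟨p, hp, rfl⟩
    exact ⟨⟨p, hp.1, rfl⟩, ⟨p, hp.2, rfl⟩⟩
  · rintro a ⟨⟨p, hp, rfl⟩, ⟨q, hq, hqa⟩⟩
    have : q = p := pb_inj2 hx q (hz hq) p (hy hp) hqa
    subst this
    exact ⟨q, ⟨hp, hq⟩, rfl⟩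

/-- A subset of a member with configuration projections is a member. -/
lemma pb_sub_mem {x y : Set (SC × AT)} (hx : x ∈ PbFam L R f g) (hy : y ⊆ x)
    (h1 : Config L (Prod.fst '' y)) (h2 : Config R (Prod.snd '' y)) :
    y ∈ PbFam L R f g := by
  refine ⟨⟨(pb_finite hx).subset hy, h1, h2,
    fun p hp q hq => pb_inj1 hx p (hy hp) q (hy hq),
    fun p hp q hq => pb_inj2 hx p (hy hp) q (hy hq), ?_⟩,
    fun p hp => pb_match hx p (hy hp)⟩
  intro p hp q hq hne
  obtain ⟨z, hzx, hz1, hz2, hiff⟩ := pb_sep hx p (hy hp) q (hy hq) hne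
  refine ⟨z ∩ y, fun u hu => hu.2, ?_, ?_, ?_⟩
  · rw [img1_inter hx hzx hy]
    exact config_inter hz1 h1
  · rw [img2_inter hx hzx hy]
    exact config_inter hz2 h2
  · have h2 : q ∈ z ∩ y ↔ q ∈ z := ⟨fun h => h.1, fun h => ⟨h, hq⟩⟩
    constructor
    · intro hpz hqzy
      exact (hiff.mp hpz.1) (h2.mp hqzy)
    · intro hq2
      exact ⟨hiff.mpr (fun hqz => hq2 (h2.mpr hqz)), hp⟩

lemma pb_partner1 {x : Set (SC × AT)} (hx : x ∈ PbFam L R f g) {p : SC × AT}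
    (hp : p ∈ x) {l : SC} (hl : L.le l p.1) : ∃ q ∈ x, q.1 = l := by
  have h := (pb_cfg1 hx).2 ⟨p, hp, rfl⟩ hl
  rcases h with ⟨q, hq, hq1⟩
  exact ⟨q, hq, hq1⟩

lemma pb_partner2 {x : Set (SC × AT)} (hx : x ∈ PbFam L R f g) {p : SC × AT}
    (hp : p ∈ x) {r : AT} (hr : R.le r p.2) : ∃ q ∈ x, q.2 = r := by
  have h := (pb_cfg2 hx).2 ⟨p, hp, rfl⟩ hr
  rcases h with ⟨q, hq, hq1⟩
  exact ⟨q, hq, hq1⟩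

/-- One-step causal dependency in a member of the pullback family. -/
def CStep (L : ES SC) (R : ES AT) (x : Set (SC × AT)) (p q : SC × AT) : Prop :=
  p ∈ x ∧ q ∈ x ∧ (L.le p.1 q.1 ∨ R.le p.2 q.2)

lemma famle_of_rtg {x : Set (SC × AT)} (hx : x ∈ PbFam L R f g) {p q : SC × AT}
    (h : Relation.ReflTransGen (CStep L R x) p q) : FamLe (PbFam L R f g) x p q := by
  induction h with
  | refl => exact fun y _ _ h => h
  | @tail b c hab hbc ih =>
    intro y hy hyx hcy
    rcases hbc with ⟨hb, hc, hor⟩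
    have hby : b ∈ y := by
      rcases hor with h1 | h1
      · obtain ⟨u, hu, hu1⟩ := pb_partner1 hy hcy h1
        have : u = b := pb_inj1 hx u (hyx hu) b hb hu1
        exact this ▸ hu
      · obtain ⟨u, hu, hu1⟩ := pb_partner2 hy hcy h1
        have : u = b := pb_inj2 hx u (hyx hu) b hb hu1
        exact this ▸ hu
    exact ih y hy hyx hby

lemma pb_downset_mem {x : Set (SC × AT)} (hx : x ∈ PbFam L R f g) {q : SC × AT}
    (hq : q ∈ x) :
    {p ∈ x | Relation.ReflTransGen (CStep L R x) p q} ∈ PbFam L R f g := by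
  set D := {p ∈ x | Relation.ReflTransGen (CStep L R x) p q} with hD
  have hDsub : D ⊆ x := fun p hp => hp.1
  refine pb_sub_mem hx hDsub ⟨?_, ?_⟩ ⟨?_, ?_⟩
  · exact L.con_mono (Set.image_mono hDsub) (pb_cfg1 hx).1
  · rintro a ⟨u, hu, rfl⟩ l hl
    obtain ⟨v, hv, hv1⟩ := pb_partner1 hx hu.1 hl
    have hstep : CStep L R x v u := ⟨hv, hu.1, Or.inl (hv1 ▸ hl)⟩
    have : v ∈ D := ⟨hv, Relation.ReflTransGen.head hstep hu.2⟩
    exact ⟨v, this, hv1⟩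
  · exact R.con_mono (Set.image_mono hDsub) (pb_cfg2 hx).1
  · rintro a ⟨u, hu, rfl⟩ r hr
    obtain ⟨v, hv, hv1⟩ := pb_partner2 hx hu.1 hr
    have hstep : CStep L R x v u := ⟨hv, hu.1, Or.inr (hv1 ▸ hr)⟩
    have : v ∈ D := ⟨hv, Relation.ReflTransGen.head hstep hu.2⟩
    exact ⟨v, this, hv1⟩

end AuxPb

section AuxPb2

variable {SC AT G : Type u} {L : ES SC} {R : ES AT} {f : SC → G} {g : AT → G}

lemma rtg_of_famle {x : Set (SC × AT)} (hx : x ∈ PbFam L R f g) {p q : SC × AT}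
    (hp : p ∈ x) (hq : q ∈ x) (h : FamLe (PbFam L R f g) x p q) :
    Relation.ReflTransGen (CStep L R x) p q := by
  have hD := pb_downset_mem hx hq
  have := h _ hD (fun u hu => hu.1) ⟨hq, Relation.ReflTransGen.refl⟩
  exact this.2

lemma famprime_eq_downset {x : Set (SC × AT)} (hx : x ∈ PbFam L R f g) {q : SC × AT}
    (hq : q ∈ x) :
    FamPrime (PbFam L R f g) x q = {p ∈ x | Relation.ReflTransGen (CStep L R x) p q} := by
  ext p
  constructor
  · rintro ⟨hp, hle⟩
    exact ⟨hp, rtg_of_famle hx hp hq hle⟩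
  · rintro ⟨hp, hrtg⟩
    exact ⟨hp, famle_of_rtg hx hrtg⟩

lemma famprime_mem {x : Set (SC × AT)} (hx : x ∈ PbFam L R f g) {q : SC × AT}
    (hq : q ∈ x) : FamPrime (PbFam L R f g) x q ∈ PbFam L R f g := by
  rw [famprime_eq_downset hx hq]
  exact pb_downset_mem hx hq

lemma mem_famprime_self {x : Set (SC × AT)} {q : SC × AT} (hq : q ∈ x) :
    q ∈ FamPrime (PbFam L R f g) x q :=
  ⟨hq, fun y _ _ h => h⟩

lemma famprime_subset {x : Set (SC × AT)} {q : SC × AT} :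
    FamPrime (PbFam L R f g) x q ⊆ x := fun p hp => hp.1

lemma famle_antisymm {x : Set (SC × AT)} (hx : x ∈ PbFam L R f g) {p q : SC × AT}
    (hp : p ∈ x) (hq : q ∈ x) (h1 : FamLe (PbFam L R f g) x p q)
    (h2 : FamLe (PbFam L R f g) x q p) : p = q := by
  by_contra hne
  obtain ⟨y, hyx, hc1, hc2, hiff⟩ := pb_sep hx p hp q hq hne
  have hyF : y ∈ PbFam L R f g := pb_sub_mem hx hyx hc1 hc2
  by_cases hpy : p ∈ y
  · exact (hiff.mp hpy) (h2 y hyF hyx hpy)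
  · have hqy : q ∈ y := by
      by_contra hqy
      exact hpy (hiff.mpr hqy)
    exact hpy (h1 y hyF hyx hqy)

lemma famprime_nested {x y : Set (SC × AT)} (hy : y ∈ PbFam L R f g)
    (hx : x ∈ PbFam L R f g) (hsub : y ⊆ x) {e : SC × AT} (he : e ∈ y) :
    FamPrime (PbFam L R f g) y e = FamPrime (PbFam L R f g) x e := by
  ext p
  constructor
  · rintro ⟨hp, hle⟩
    refine ⟨hsub hp, ?_⟩
    intro v hv hvx hev
    have hvy : v ∩ y ∈ PbFam L R f g := by
      refine pb_sub_mem hx (fun u hu => hvx hu.1) ?_ ?_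
      · rw [img1_inter hx hvx hsub]
        exact config_inter (pb_cfg1 hv) (pb_cfg1 hy)
      · rw [img2_inter hx hvx hsub]
        exact config_inter (pb_cfg2 hv) (pb_cfg2 hy)
    have := hle (v ∩ y) hvy (fun u hu => hu.2) ⟨hev, he⟩
    exact this.1
  · rintro ⟨hp, hle⟩
    have hpy : p ∈ y := hle y hy hsub he
    refine ⟨hpy, ?_⟩
    intro v hv hvy hev
    exact hle v hv (fun u hu => hsub (hvy hu)) hev

lemma prime_retarget {x y : Set (SC × AT)} (hy : y ∈ PbFam L R f g)
    (hx : x ∈ PbFam L R f g) {e : SC × AT} (he : e ∈ y)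
    (hsub : FamPrime (PbFam L R f g) y e ⊆ x) :
    FamPrime (PbFam L R f g) y e = FamPrime (PbFam L R f g) x e := by
  have hqF : FamPrime (PbFam L R f g) y e ∈ PbFam L R f g := famprime_mem hy he
  have heq : e ∈ FamPrime (PbFam L R f g) y e := mem_famprime_self he
  have h1 : FamPrime (PbFam L R f g) (FamPrime (PbFam L R f g) y e) e =
      FamPrime (PbFam L R f g) y e :=
    famprime_nested hqF hy famprime_subset heq
  have h2 : FamPrime (PbFam L R f g) (FamPrime (PbFam L R f g) y e) e =
      FamPrime (PbFam L R f g) x e :=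
    famprime_nested hqF hx hsub heq
  rw [← h1, h2]

lemma prime_top_unique {x : Set (SC × AT)} (hx : x ∈ PbFam L R f g) {e e' : SC × AT}
    (he : e ∈ x) (he' : e' ∈ x)
    (h : FamPrime (PbFam L R f g) x e = FamPrime (PbFam L R f g) x e') : e = e' := by
  have h1 : e' ∈ FamPrime (PbFam L R f g) x e := h ▸ mem_famprime_self he'
  have h2 : e ∈ FamPrime (PbFam L R f g) x e' := h ▸ mem_famprime_self he
  exact famle_antisymm hx he he' h2.2 h1.2

end AuxPb2

section AuxStrat

variable {S T GA GB GC : Type u}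

/-- Reduced one-step causality in the interaction: a step through `S` or through `T`. -/
def StepST (ES' : ES S) (ET : ES T) (x : Set ((S ⊕ GC) × (GA ⊕ T)))
    (p q : (S ⊕ GC) × (GA ⊕ T)) : Prop :=
  p ∈ x ∧ q ∈ x ∧ p ≠ q ∧
    ((∃ sp sq, p.1 = Sum.inl sp ∧ q.1 = Sum.inl sq ∧ ES'.le sp sq) ∨
     (∃ tp tq, p.2 = Sum.inr tp ∧ q.2 = Sum.inr tq ∧ ET.le tp tq))

/-- Minimality w.r.t. `StepST` in `x`. -/
def MinST (ES' : ES S) (ET : ES T) (x : Set ((S ⊕ GC) × (GA ⊕ T)))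
    (k : (S ⊕ GC) × (GA ⊕ T)) : Prop :=
  k ∈ x ∧ ∀ p, StepST ES' ET x p k → False

lemma pb_shape {σ : S → GA ⊕ GB} {τ : T → GB ⊕ GC}
    {L : ES (S ⊕ GC)} {R : ES (GA ⊕ T)} {x : Set ((S ⊕ GC) × (GA ⊕ T))}
    (hx : x ∈ PbFam L R (compLeft σ) (compRight τ))
    {p : (S ⊕ GC) × (GA ⊕ T)} (hp : p ∈ x) :
    (∃ s a, p.1 = Sum.inl s ∧ p.2 = Sum.inl a ∧ σ s = Sum.inl a) ∨
    (∃ s t b, p.1 = Sum.inl s ∧ p.2 = Sum.inr t ∧ σ s = Sum.inr b ∧ τ t = Sum.inl b) ∨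
    (∃ c t, p.1 = Sum.inr c ∧ p.2 = Sum.inr t ∧ τ t = Sum.inr c) := by
  have hm := pb_match hx p hp
  rcases p with ⟨l, r⟩
  rcases l with s | c <;> rcases r with a | t
  · left
    simp [compLeft, compRight] at hm
    exact ⟨s, a, rfl, rfl, hm⟩
  · rcases hτ : τ t with b | c
    · right; left
      simp [compLeft, compRight, hτ] at hm
      exact ⟨s, t, b, rfl, rfl, hm, hτ⟩
    · simp [compLeft, compRight, hτ] at hm
  · simp [compLeft, compRight] at hm
  · rcases hτ : τ t with b | c'
    · simp [compLeft, compRight, hτ] at hm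
    · right; right
      simp [compLeft, compRight, hτ] at hm
      subst hm
      exact ⟨c, t, rfl, rfl, hτ⟩

variable {PS : ESP S} {PT : ESP T} {PA : ESP GA} {PB : ESP GB} {PC : ESP GC}
  {σ : S → GA ⊕ GB} {τ : T → GB ⊕ GC} {L : ES (S ⊕ GC)} {R : ES (GA ⊕ T)}

/-- Pre-digested context of facts about the interaction of two negative
single-threaded ∼-strategies. -/
structure SCtx (PS : ESP S) (PT : ESP T) (PA : ESP GA) (PB : ESP GB) (PC : ESP GC)
    (σ : S → GA ⊕ GB) (τ : T → GB ⊕ GC) (L : ES (S ⊕ GC)) (R : ES (GA ⊕ T)) : Prop where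
  hL : IsParES PS.toES PC.toES L
  hR : IsParES PA.toES PT.toES R
  hσmin : ∀ s, IsMinimal PS.toES s → ∃ b, σ s = Sum.inr b ∧ IsMinimal PB.toES b
  hτmin : ∀ t, IsMinimal PT.toES t → ∃ c, τ t = Sum.inr c ∧ IsMinimal PC.toES c ∧
    PC.pol c = false
  hσcourtB : ∀ s' s b, Imm PS.toES s' s → PS.pol s = false → σ s = Sum.inr b →
    ∃ b', σ s' = Sum.inr b' ∧ PB.le b' b ∧ b' ≠ b
  hτcourtB : ∀ t' t b, Imm PT.toES t' t → PT.pol t = false → τ t = Sum.inl b →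
    ∃ b', τ t' = Sum.inl b' ∧ PB.le b' b ∧ b' ≠ b
  hσimgA : ∀ s a' a, σ s = Sum.inl a → PA.le a' a → ∃ s', PS.le s' s ∧ σ s' = Sum.inl a'
  hσimgB : ∀ s b' b, σ s = Sum.inr b → PB.le b' b → ∃ s', PS.le s' s ∧ σ s' = Sum.inr b'
  hτimgB : ∀ t b' b, τ t = Sum.inl b → PB.le b' b → ∃ t', PT.le t' t ∧ τ t' = Sum.inl b'
  hτimgC : ∀ t c' c, τ t = Sum.inr c → PC.le c' c → ∃ t', PT.le t' t ∧ τ t' = Sum.inr c'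
  hσinj : ∀ x, Config PS.toES x → ∀ s ∈ x, ∀ s' ∈ x, σ s = σ s' → s = s'
  hτinj : ∀ x, Config PT.toES x → ∀ t ∈ x, ∀ t' ∈ x, τ t = τ t' → t = t'
  hτC_con : ∀ Y, Config PT.toES Y → {c | Sum.inr c ∈ τ '' Y} ∈ PC.Con
  hσA_con : ∀ Y, Config PS.toES Y → {a | Sum.inl a ∈ σ '' Y} ∈ PA.Con
  hpolS : ∀ s b, σ s = Sum.inr b → PS.pol s = PB.pol b
  hpolT : ∀ t b, τ t = Sum.inl b → PT.pol t = !PB.pol b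
  hstS : SingleThreaded PS.toES
  hstT : SingleThreaded PT.toES

namespace SCtx

variable (ctx : SCtx PS PT PA PB PC σ τ L R)
include ctx

/-- The S-component of the first projection of a member is a configuration of S. -/
lemma Scfg {x : Set ((S ⊕ GC) × (GA ⊕ T))}
    (hx : x ∈ PbFam L R (compLeft σ) (compRight τ)) :
    Config PS.toES (Sum.inl ⁻¹' (Prod.fst '' x)) :=
  (parES_config_components ctx.hL (pb_cfg1 hx)).1

lemma Tcfg {x : Set ((S ⊕ GC) × (GA ⊕ T))}
    (hx : x ∈ PbFam L R (compLeft σ) (compRight τ)) :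
    Config PT.toES (Sum.inr ⁻¹' (Prod.snd '' x)) :=
  (parES_config_components ctx.hR (pb_cfg2 hx)).2

lemma memS {x : Set ((S ⊕ GC) × (GA ⊕ T))} {p : (S ⊕ GC) × (GA ⊕ T)} (hp : p ∈ x)
    {s : S} (h : p.1 = Sum.inl s) : s ∈ Sum.inl ⁻¹' (Prod.fst '' x) := by
  exact ⟨p, hp, h⟩

lemma memT {x : Set ((S ⊕ GC) × (GA ⊕ T))} {p : (S ⊕ GC) × (GA ⊕ T)} (hp : p ∈ x)
    {t : T} (h : p.2 = Sum.inr t) : t ∈ Sum.inr ⁻¹' (Prod.snd '' x) := by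
  exact ⟨p, hp, h⟩

/-- Every step of the interaction is subsumed by an S- or T-step. -/
lemma subsume {x : Set ((S ⊕ GC) × (GA ⊕ T))}
    (hx : x ∈ PbFam L R (compLeft σ) (compRight τ)) {p q : (S ⊕ GC) × (GA ⊕ T)}
    (h : CStep L R x p q) : p = q ∨ StepST PS.toES PT.toES x p q := by
  by_cases hpq : p = q
  · exact Or.inl hpq
  obtain ⟨hp, hq, hor⟩ := h
  right
  refine ⟨hp, hq, hpq, ?_⟩
  rcases hor with hle | hle
  · -- a step through L = S ∥ C
    have hp' : (∃ s, p.1 = Sum.inl s) ∨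
        (∃ c t, p.1 = Sum.inr c ∧ p.2 = Sum.inr t ∧ τ t = Sum.inr c) := by
      rcases pb_shape hx hp with ⟨s, a, h1, _, _⟩ | ⟨s, t, b, h1, _, _, _⟩ | ⟨c, t, h1, h2, h3⟩
      exacts [Or.inl ⟨s, h1⟩, Or.inl ⟨s, h1⟩, Or.inr ⟨c, t, h1, h2, h3⟩]
    have hq' : (∃ s, q.1 = Sum.inl s) ∨
        (∃ c t, q.1 = Sum.inr c ∧ q.2 = Sum.inr t ∧ τ t = Sum.inr c) := by
      rcases pb_shape hx hq with ⟨s, a, h1, _, _⟩ | ⟨s, t, b, h1, _, _, _⟩ | ⟨c, t, h1, h2, h3⟩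
      exacts [Or.inl ⟨s, h1⟩, Or.inl ⟨s, h1⟩, Or.inr ⟨c, t, h1, h2, h3⟩]
    rcases hp' with ⟨s, hs⟩ | ⟨c, t, hc, hct, hτt⟩ <;>
      rcases hq' with ⟨s', hs'⟩ | ⟨c', t', hc', hct', hτt'⟩
    · rw [hs, hs'] at hle
      exact Or.inl ⟨s, s', hs, hs', (parES_le_inl ctx.hL).mp hle⟩
    · exfalso
      rw [hs, hc', ctx.hL.1] at hle
      cases hle
    · exfalso
      rw [hc, hs', ctx.hL.1] at hle
      cases hle
    · -- a C-step, subsumed by a T-step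
      rw [hc, hc'] at hle
      have hcc : PC.le c c' := (parES_le_inr ctx.hL).mp hle
      obtain ⟨t'', htle, hτt''⟩ := ctx.hτimgC t' c c' hτt' hcc
      have ht'' : t'' ∈ Sum.inr ⁻¹' (Prod.snd '' x) :=
        (ctx.Tcfg hx).2 (ctx.memT hq hct') htle
      have ht : t ∈ Sum.inr ⁻¹' (Prod.snd '' x) := ctx.memT hp hct
      have heq : t'' = t := ctx.hτinj _ (ctx.Tcfg hx) t'' ht'' t ht (by rw [hτt'', hτt])
      subst heq
      exact Or.inr ⟨t'', t', hct, hct', htle⟩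
  · -- a step through R = A ∥ T
    have hp' : (∃ t, p.2 = Sum.inr t) ∨
        (∃ s a, p.1 = Sum.inl s ∧ p.2 = Sum.inl a ∧ σ s = Sum.inl a) := by
      rcases pb_shape hx hp with ⟨s, a, h1, h2, h3⟩ | ⟨s, t, b, _, h2, _, _⟩ | ⟨c, t, _, h2, _⟩
      exacts [Or.inr ⟨s, a, h1, h2, h3⟩, Or.inl ⟨t, h2⟩, Or.inl ⟨t, h2⟩]
    have hq' : (∃ t, q.2 = Sum.inr t) ∨
        (∃ s a, q.1 = Sum.inl s ∧ q.2 = Sum.inl a ∧ σ s = Sum.inl a) := by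
      rcases pb_shape hx hq with ⟨s, a, h1, h2, h3⟩ | ⟨s, t, b, _, h2, _, _⟩ | ⟨c, t, _, h2, _⟩
      exacts [Or.inr ⟨s, a, h1, h2, h3⟩, Or.inl ⟨t, h2⟩, Or.inl ⟨t, h2⟩]
    rcases hp' with ⟨t, ht⟩ | ⟨s, a, hsa, hpa, hσs⟩ <;>
      rcases hq' with ⟨t', ht'⟩ | ⟨s', a', hsa', hpa', hσs'⟩
    · rw [ht, ht'] at hle
      exact Or.inr ⟨t, t', ht, ht', (parES_le_inr ctx.hR).mp hle⟩
    · exfalso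
      rw [ht, hpa', ctx.hR.1] at hle
      cases hle
    · exfalso
      rw [hpa, ht', ctx.hR.1] at hle
      cases hle
    · -- an A-step, subsumed by an S-step
      rw [hpa, hpa'] at hle
      have haa : PA.le a a' := (parES_le_inl ctx.hR).mp hle
      obtain ⟨s'', hsle, hσs''⟩ := ctx.hσimgA s' a a' hσs' haa
      have hs'' : s'' ∈ Sum.inl ⁻¹' (Prod.fst '' x) :=
        (ctx.Scfg hx).2 (ctx.memS hq hsa') hsle
      have hs : s ∈ Sum.inl ⁻¹' (Prod.fst '' x) := ctx.memS hp hsa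
      have heq : s'' = s := ctx.hσinj _ (ctx.Scfg hx) s'' hs'' s hs (by rw [hσs'', hσs])
      subst heq
      exact Or.inl ⟨s'', s', hsa, hsa', hsle⟩

lemma step_cstep {x : Set ((S ⊕ GC) × (GA ⊕ T))} {p q : (S ⊕ GC) × (GA ⊕ T)}
    (h : StepST PS.toES PT.toES x p q) : CStep L R x p q := by
  obtain ⟨hp, hq, _, hor⟩ := h
  refine ⟨hp, hq, ?_⟩
  rcases hor with ⟨sp, sq, h1, h2, h3⟩ | ⟨tp, tq, h1, h2, h3⟩
  · exact Or.inl (by rw [h1, h2]; exact (parES_le_inl ctx.hL).mpr h3)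
  · exact Or.inr (by rw [h1, h2]; exact (parES_le_inr ctx.hR).mpr h3)

lemma rtg_step_of_cstep {x : Set ((S ⊕ GC) × (GA ⊕ T))}
    (hx : x ∈ PbFam L R (compLeft σ) (compRight τ)) {p q : (S ⊕ GC) × (GA ⊕ T)}
    (h : Relation.ReflTransGen (CStep L R x) p q) :
    Relation.ReflTransGen (StepST PS.toES PT.toES x) p q := by
  induction h with
  | refl => exact Relation.ReflTransGen.refl
  | @tail b c hab hbc ih =>
    rcases ctx.subsume hx hbc with rfl | hstep
    · exact ih
    · exact Relation.ReflTransGen.tail ih hstep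

lemma rtg_cstep_of_step {x : Set ((S ⊕ GC) × (GA ⊕ T))} {p q : (S ⊕ GC) × (GA ⊕ T)}
    (h : Relation.ReflTransGen (StepST PS.toES PT.toES x) p q) :
    Relation.ReflTransGen (CStep L R x) p q :=
  Relation.ReflTransGen.mono (fun _ _ hh => ctx.step_cstep hh) _ _ h

lemma rtg_antisymm {x : Set ((S ⊕ GC) × (GA ⊕ T))}
    (hx : x ∈ PbFam L R (compLeft σ) (compRight τ)) {p q : (S ⊕ GC) × (GA ⊕ T)}
    (hp : p ∈ x) (hq : q ∈ x)
    (h1 : Relation.ReflTransGen (StepST PS.toES PT.toES x) p q)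
    (h2 : Relation.ReflTransGen (StepST PS.toES PT.toES x) q p) : p = q :=
  famle_antisymm hx hp hq (famle_of_rtg hx (ctx.rtg_cstep_of_step h1))
    (famle_of_rtg hx (ctx.rtg_cstep_of_step h2))

lemma rtg_min_eq {x : Set ((S ⊕ GC) × (GA ⊕ T))} {p k : (S ⊕ GC) × (GA ⊕ T)}
    (hk : MinST PS.toES PT.toES x k)
    (h : Relation.ReflTransGen (StepST PS.toES PT.toES x) p k) : p = k := by
  rcases Relation.ReflTransGen.cases_tail h with rfl | ⟨q, _, hq2⟩
  · rfl
  · exact absurd hq2 (hk.2 q)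

/-- Classification of minimal events of the interaction: they are pairs of a
minimal event of `C` and a minimal event of `T`. -/
lemma min_shape {x : Set ((S ⊕ GC) × (GA ⊕ T))}
    (hx : x ∈ PbFam L R (compLeft σ) (compRight τ)) {k : (S ⊕ GC) × (GA ⊕ T)}
    (hk : MinST PS.toES PT.toES x k) :
    ∃ c t, k.1 = Sum.inr c ∧ k.2 = Sum.inr t ∧ τ t = Sum.inr c ∧
      IsMinimal PT.toES t ∧ IsMinimal PC.toES c ∧ PC.pol c = false := by
  obtain ⟨hkx, hmin⟩ := hk
  have hSmin : ∀ s, k.1 = Sum.inl s → IsMinimal PS.toES s := by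
    intro s hs
    by_contra hnm
    unfold IsMinimal at hnm
    push_neg at hnm
    obtain ⟨s', hle, hne⟩ := hnm
    obtain ⟨p, hp, hp1⟩ := pb_partner1 hx hkx (l := Sum.inl s')
      (by rw [hs]; exact (parES_le_inl ctx.hL).mpr hle)
    refine hmin p ⟨hp, hkx, ?_, Or.inl ⟨s', s, hp1, hs, hle⟩⟩
    intro heq
    rw [heq, hs] at hp1
    injection hp1 with hh
    exact hne hh.symm
  have hTmin : ∀ t, k.2 = Sum.inr t → IsMinimal PT.toES t := by
    intro t ht
    by_contra hnm
    unfold IsMinimal at hnm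
    push_neg at hnm
    obtain ⟨t', hle, hne⟩ := hnm
    obtain ⟨p, hp, hp2⟩ := pb_partner2 hx hkx (r := Sum.inr t')
      (by rw [ht]; exact (parES_le_inr ctx.hR).mpr hle)
    refine hmin p ⟨hp, hkx, ?_, Or.inr ⟨t', t, hp2, ht, hle⟩⟩
    intro heq
    rw [heq, ht] at hp2
    injection hp2 with hh
    exact hne hh.symm
  rcases pb_shape hx hkx with ⟨s, a, h1, h2, h3⟩ | ⟨s, t, b, h1, h2, h3, h4⟩ |
    ⟨c, t, h1, h2, h3⟩
  · exfalso
    obtain ⟨b, hb, _⟩ := ctx.hσmin s (hSmin s h1)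
    rw [h3] at hb
    cases hb
  · exfalso
    obtain ⟨c, hc, _, _⟩ := ctx.hτmin t (hTmin t h2)
    rw [h4] at hc
    cases hc
  · have htm := hTmin t h2
    obtain ⟨c', hc', hcm, hcp⟩ := ctx.hτmin t htm
    rw [h3] at hc'
    have : c = c' := by injection hc'
    subst this
    exact ⟨c, t, h1, h2, h3, htm, hcm, hcp⟩

end SCtx

end AuxStrat

/-- Specification of the thread-origin function of a single-threaded event structure. -/
def MuSpec {E : Type u} (A : ES E) (μ : E → E) : Prop :=
  ∀ e, A.le (μ e) e ∧ IsMinimal A (μ e) ∧ ∀ m, A.le m e → IsMinimal A m → m = μ e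

lemma MuSpec.eq_of_le {E : Type u} {A : ES E} {μ : E → E} (h : MuSpec A μ) {e' e : E}
    (hle : A.le e' e) : μ e' = μ e :=
  (h e).2.2 (μ e') (A.le_trans (h e').1 hle) (h e').2.1

lemma MuSpec.self {E : Type u} {A : ES E} {μ : E → E} (h : MuSpec A μ) {e : E}
    (hm : IsMinimal A e) : μ e = e :=
  ((h e).2.2 e (A.le_refl e) hm).symm

section AuxStrat2

variable {S T GA GB GC : Type u}
  {PS : ESP S} {PT : ESP T} {PA : ESP GA} {PB : ESP GB} {PC : ESP GC}
  {σ : S → GA ⊕ GB} {τ : T → GB ⊕ GC} {L : ES (S ⊕ GC)} {R : ES (GA ⊕ T)}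

lemma rtg_mem {x : Set ((S ⊕ GC) × (GA ⊕ T))} {p q : (S ⊕ GC) × (GA ⊕ T)}
    (h : Relation.ReflTransGen (StepST PS.toES PT.toES x) p q) :
    p = q ∨ (p ∈ x ∧ q ∈ x) := by
  induction h with
  | refl => exact Or.inl rfl
  | @tail b c hab hbc ih =>
    rcases ih with rfl | ⟨h1, h2⟩
    · exact Or.inr ⟨hbc.1, hbc.2.1⟩
    · exact Or.inr ⟨h1, hbc.2.1⟩

namespace SCtx

variable (ctx : SCtx PS PT PA PB PC σ τ L R)
include ctx

lemma min_exists {x : Set ((S ⊕ GC) × (GA ⊕ T))}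
    (hx : x ∈ PbFam L R (compLeft σ) (compRight τ)) {p : (S ⊕ GC) × (GA ⊕ T)}
    (hp : p ∈ x) :
    ∃ k, MinST PS.toES PT.toES x k ∧
      Relation.ReflTransGen (StepST PS.toES PT.toES x) k p := by
  have main : ∀ n : ℕ, ∀ p, p ∈ x →
      ({q ∈ x | Relation.ReflTransGen (StepST PS.toES PT.toES x) q p}).ncard ≤ n →
      ∃ k, MinST PS.toES PT.toES x k ∧
        Relation.ReflTransGen (StepST PS.toES PT.toES x) k p := by
    intro n
    induction n with
    | zero =>
      intro p hp hcard
      exfalso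
      have hne : ({q ∈ x | Relation.ReflTransGen (StepST PS.toES PT.toES x) q p}).Nonempty :=
        ⟨p, hp, Relation.ReflTransGen.refl⟩
      have hfin : ({q ∈ x | Relation.ReflTransGen (StepST PS.toES PT.toES x) q p}).Finite :=
        (pb_finite hx).subset (fun z hz => hz.1)
      have := (Set.ncard_pos hfin).mpr hne
      omega
    | succ n ih =>
      intro p hp hcard
      by_cases hmin : ∀ q, StepST PS.toES PT.toES x q p → False
      · exact ⟨p, ⟨hp, hmin⟩, Relation.ReflTransGen.refl⟩
      · push_neg at hmin
        obtain ⟨q, hq, -⟩ := hmin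
        have hqx : q ∈ x := hq.1
        have hsub : {r ∈ x | Relation.ReflTransGen (StepST PS.toES PT.toES x) r q} ⊆
            {r ∈ x | Relation.ReflTransGen (StepST PS.toES PT.toES x) r p} :=
          fun r hr => ⟨hr.1, Relation.ReflTransGen.tail hr.2 hq⟩
        have hss : {r ∈ x | Relation.ReflTransGen (StepST PS.toES PT.toES x) r q} ⊂
            {r ∈ x | Relation.ReflTransGen (StepST PS.toES PT.toES x) r p} := by
          refine ⟨hsub, fun hcl => ?_⟩
          have hpin := hcl ⟨hp, Relation.ReflTransGen.refl⟩
          have : p = q := ctx.rtg_antisymm hx hp hqx hpin.2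
            (Relation.ReflTransGen.single hq)
          exact hq.2.2.1 (this ▸ rfl)
        have hfin : ({r ∈ x | Relation.ReflTransGen (StepST PS.toES PT.toES x) r p}).Finite :=
          (pb_finite hx).subset (fun z hz => hz.1)
        have hlt := Set.ncard_lt_ncard hss hfin
        obtain ⟨k, hk, hkq⟩ := ih q hqx (by omega)
        exact ⟨k, hk, Relation.ReflTransGen.tail hkq hq⟩
  exact main _ p hp le_rfl

lemma min_prime_singleton {x : Set ((S ⊕ GC) × (GA ⊕ T))}
    (hx : x ∈ PbFam L R (compLeft σ) (compRight τ)) {k : (S ⊕ GC) × (GA ⊕ T)}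
    (hk : MinST PS.toES PT.toES x k) :
    FamPrime (PbFam L R (compLeft σ) (compRight τ)) x k = {k} := by
  rw [famprime_eq_downset hx hk.1]
  ext p
  constructor
  · rintro ⟨hpx, hrtg⟩
    exact ctx.rtg_min_eq hk (ctx.rtg_step_of_cstep hx hrtg)
  · rintro rfl
    exact ⟨hk.1, Relation.ReflTransGen.refl⟩

/-- The canonical minimal pair below any pair with a T-component. -/
lemma t_origin {μT : T → T} (hμT : MuSpec PT.toES μT) {x : Set ((S ⊕ GC) × (GA ⊕ T))}
    (hx : x ∈ PbFam L R (compLeft σ) (compRight τ)) {p : (S ⊕ GC) × (GA ⊕ T)}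
    (hp : p ∈ x) {t : T} (ht : p.2 = Sum.inr t) :
    ∃ k c, MinST PS.toES PT.toES x k ∧
      Relation.ReflTransGen (StepST PS.toES PT.toES x) k p ∧
      k.1 = Sum.inr c ∧ k.2 = Sum.inr (μT t) ∧ τ (μT t) = Sum.inr c := by
  obtain ⟨c, hc, hcmin, hcpol⟩ := ctx.hτmin (μT t) (hμT t).2.1
  obtain ⟨k, hkx, hk2⟩ := pb_partner2 hx hp (r := Sum.inr (μT t))
    (by rw [ht]; exact (parES_le_inr ctx.hR).mpr (hμT t).1)
  have hk1 : k.1 = Sum.inr c := by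
    rcases pb_shape hx hkx with ⟨s, a, h1, h2, h3⟩ | ⟨s, t₀, b, h1, h2, h3, h4⟩ |
      ⟨c₀, t₀, h1, h2, h3⟩
    · rw [h2] at hk2; cases hk2
    · exfalso
      rw [h2] at hk2
      have : t₀ = μT t := by injection hk2
      rw [this, hc] at h4
      cases h4
    · rw [h2] at hk2
      have : t₀ = μT t := by injection hk2
      rw [this, hc] at h3
      have hcc : c = c₀ := by injection h3
      rw [h1, ← hcc]
  have hkmin : MinST PS.toES PT.toES x k := by
    refine ⟨hkx, fun q hstep => ?_⟩
    rcases hstep.2.2.2 with ⟨sp, sq, _, hq1, _⟩ | ⟨tp, tq, hq2, hk2', hle⟩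
    · rw [hk1] at hq1; cases hq1
    · rw [hk2] at hk2'
      have htq : tq = μT t := by injection hk2'.symm
      rw [htq] at hle
      have : tp = μT t := (hμT t).2.1 tp hle
      have hq2' : q.2 = k.2 := by rw [hq2, this, hk2]
      exact hstep.2.2.1 (pb_inj2 hx q hstep.1 k hkx hq2')
  refine ⟨k, c, hkmin, ?_, hk1, hk2, hc⟩
  by_cases hkp : k = p
  · exact hkp ▸ Relation.ReflTransGen.refl
  · exact Relation.ReflTransGen.single
      ⟨hkx, hp, hkp, Or.inr ⟨μT t, t, hk2, ht, (hμT t).1⟩⟩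

end SCtx

end AuxStrat2

section AuxStrat3

variable {S T GA GB GC : Type u}
  {PS : ESP S} {PT : ESP T} {PA : ESP GA} {PB : ESP GB} {PC : ESP GC}
  {σ : S → GA ⊕ GB} {τ : T → GB ⊕ GC} {L : ES (S ⊕ GC)} {R : ES (GA ⊕ T)}

namespace SCtx

variable (ctx : SCtx PS PT PA PB PC σ τ L R)
include ctx

/-- The link lemma: for a synchronised pair, the thread of the T-partner of the
S-thread origin agrees with the thread of the T-component. -/
lemma link {μS : S → S} {μT : T → T} (hμS : MuSpec PS.toES μS) (hμT : MuSpec PT.toES μT)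
    {x : Set ((S ⊕ GC) × (GA ⊕ T))}
    (hx : x ∈ PbFam L R (compLeft σ) (compRight τ)) :
    ∀ {p : (S ⊕ GC) × (GA ⊕ T)}, p ∈ x → ∀ {s t}, p.1 = Sum.inl s → p.2 = Sum.inr t →
    ∀ {p₀ : (S ⊕ GC) × (GA ⊕ T)} {t₀}, p₀ ∈ x → p₀.1 = Sum.inl (μS s) →
      p₀.2 = Sum.inr t₀ → μT t₀ = μT t := by
  have main : ∀ n : ℕ, ∀ p : (S ⊕ GC) × (GA ⊕ T), p ∈ x → ∀ s t, p.1 = Sum.inl s →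
      p.2 = Sum.inr t → ({s' | PS.le s' s}).ncard ≤ n →
      ∀ p₀ : (S ⊕ GC) × (GA ⊕ T), ∀ t₀, p₀ ∈ x → p₀.1 = Sum.inl (μS s) →
      p₀.2 = Sum.inr t₀ → μT t₀ = μT t := by
    intro n
    induction n with
    | zero =>
      intro p hp s t h1 h2 hcard
      exfalso
      have hne : ({s' | PS.le s' s}).Nonempty := ⟨s, PS.le_refl s⟩
      have := (Set.ncard_pos (PS.causes_finite s)).mpr hne
      omega
    | succ n ih =>
      intro p hp s t h1 h2 hcard p₀ t₀ hp₀ hp₀1 hp₀2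
      by_cases hss : μS s = s
      · -- base case: s is its own thread origin
        have : p₀ = p := pb_inj1 hx p₀ hp₀ p hp (by rw [hp₀1, hss, h1])
        subst this
        rw [hp₀2] at h2
        have : t₀ = t := Sum.inr.inj h2
        rw [this]
      · -- s is not minimal
        have hsnm : ¬ IsMinimal PS.toES s := fun hm => hss (hμS.self hm)
        -- the pair p is a synchronisation on some b
        obtain ⟨b, hσs, hτt⟩ : ∃ b, σ s = Sum.inr b ∧ τ t = Sum.inl b := by
          rcases pb_shape hx hp with ⟨s₁, a, g1, g2, g3⟩ | ⟨s₁, t₁, b, g1, g2, g3, g4⟩ |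
            ⟨c, t₁, g1, g2, g3⟩
          · rw [h2] at g2; cases g2
          · rw [h1] at g1
            have hs1 : s₁ = s := (Sum.inl.inj g1).symm
            rw [h2] at g2
            have ht1 : t₁ = t := (Sum.inr.inj g2).symm
            exact ⟨b, hs1 ▸ g3, ht1 ▸ g4⟩
          · rw [h1] at g1; cases g1
        have hcaus : ∀ s' , PS.le s' s → s' ≠ s →
            ({u | PS.le u s'}).ncard ≤ n := by
          intro s' hle hne
          have hsub : {u | PS.le u s'} ⊆ {u | PS.le u s} :=
            fun u hu => PS.le_trans hu hle
          have hss' : {u | PS.le u s'} ⊂ {u | PS.le u s} := by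
            refine ⟨hsub, fun hcl => ?_⟩
            have hmem : s ∈ {u | PS.le u s'} := hcl (Set.mem_setOf.mpr (PS.le_refl s))
            exact hne ((PS.le_antisymm (Set.mem_setOf.mp hmem) hle).symm)
          have := Set.ncard_lt_ncard hss' (PS.causes_finite s)
          omega
        rcases hb : PB.pol b with _ | _
        · -- b negative: descend through S using courtesy of σ
          have hpols : PS.pol s = false := by rw [ctx.hpolS s b hσs, hb]
          obtain ⟨s', himm⟩ := exists_imm_pred PS.toES hsnm
          obtain ⟨b', hσs', hbb', hbne⟩ := ctx.hσcourtB s' s b himm hpols hσs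
          obtain ⟨p', hp', hp'1⟩ := pb_partner1 hx hp (l := Sum.inl s')
            (by rw [h1]; exact (parES_le_inl ctx.hL).mpr himm.1.1)
          -- p' is a synchronised pair on b'
          obtain ⟨t', hp'2, hτt'⟩ : ∃ t', p'.2 = Sum.inr t' ∧ τ t' = Sum.inl b' := by
            rcases pb_shape hx hp' with ⟨s₁, a, g1, g2, g3⟩ | ⟨s₁, t₁, b₁, g1, g2, g3, g4⟩ |
              ⟨c, t₁, g1, g2, g3⟩
            · rw [hp'1] at g1
              have : s₁ = s' := (Sum.inl.inj g1).symm
              rw [this, hσs'] at g3; cases g3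
            · rw [hp'1] at g1
              have hs1 : s₁ = s' := (Sum.inl.inj g1).symm
              rw [hs1, hσs'] at g3
              have : b₁ = b' := (Sum.inr.inj g3).symm
              exact ⟨t₁, g2, this ▸ g4⟩
            · rw [hp'1] at g1; cases g1
          -- t' is below t
          obtain ⟨t'', ht''le, hτt''⟩ := ctx.hτimgB t b' b hτt hbb'
          have ht'' : t'' ∈ Sum.inr ⁻¹' (Prod.snd '' x) :=
            (ctx.Tcfg hx).2 (ctx.memT hp h2) ht''le
          have ht' : t' ∈ Sum.inr ⁻¹' (Prod.snd '' x) := ctx.memT hp' hp'2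
          have htt : t' = t'' := ctx.hτinj _ (ctx.Tcfg hx) t' ht' t'' ht''
            (by rw [hτt', hτt''])
          have ht'le : PT.le t' t := htt ▸ ht''le
          have hμtt : μT t' = μT t := hμT.eq_of_le ht'le
          have hμss : μS s' = μS s := hμS.eq_of_le himm.1.1
          have := ih p' hp' s' t' hp'1 hp'2 (hcaus s' himm.1.1 himm.1.2) p₀ t₀ hp₀
            (by rw [hp₀1, hμss]) hp₀2
          rw [this, hμtt]
        · -- b positive: descend through T using courtesy of τ
          have hpolt : PT.pol t = false := by simp [ctx.hpolT t b hτt, hb]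
          have htnm : ¬ IsMinimal PT.toES t := by
            intro hm
            obtain ⟨c, hc, _, _⟩ := ctx.hτmin t hm
            rw [hτt] at hc; cases hc
          obtain ⟨t', himm⟩ := exists_imm_pred PT.toES htnm
          obtain ⟨b', hτt', hbb', hbne⟩ := ctx.hτcourtB t' t b himm hpolt hτt
          obtain ⟨p', hp', hp'2⟩ := pb_partner2 hx hp (r := Sum.inr t')
            (by rw [h2]; exact (parES_le_inr ctx.hR).mpr himm.1.1)
          obtain ⟨s', hp'1, hσs'⟩ : ∃ s', p'.1 = Sum.inl s' ∧ σ s' = Sum.inr b' := by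
            rcases pb_shape hx hp' with ⟨s₁, a, g1, g2, g3⟩ | ⟨s₁, t₁, b₁, g1, g2, g3, g4⟩ |
              ⟨c, t₁, g1, g2, g3⟩
            · rw [hp'2] at g2; cases g2
            · rw [hp'2] at g2
              have ht1 : t₁ = t' := (Sum.inr.inj g2).symm
              rw [ht1, hτt'] at g4
              have : b₁ = b' := (Sum.inl.inj g4).symm
              exact ⟨s₁, g1, this ▸ g3⟩
            · rw [hp'2] at g2
              have ht1 : t₁ = t' := (Sum.inr.inj g2).symm
              rw [ht1, hτt'] at g3; cases g3
          -- s' is below s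
          obtain ⟨s'', hs''le, hσs''⟩ := ctx.hσimgB s b' b hσs hbb'
          have hs'' : s'' ∈ Sum.inl ⁻¹' (Prod.fst '' x) :=
            (ctx.Scfg hx).2 (ctx.memS hp h1) hs''le
          have hs' : s' ∈ Sum.inl ⁻¹' (Prod.fst '' x) := ctx.memS hp' hp'1
          have hss' : s' = s'' := ctx.hσinj _ (ctx.Scfg hx) s' hs' s'' hs''
            (by rw [hσs', hσs''])
          have hs'le : PS.le s' s := hss' ▸ hs''le
          have hs'ne : s' ≠ s := by
            intro hq
            rw [hq, hσs] at hσs'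
            exact hbne ((Sum.inr.inj hσs').symm)
          have hμtt : μT t' = μT t := hμT.eq_of_le himm.1.1
          have hμss : μS s' = μS s := hμS.eq_of_le hs'le
          have := ih p' hp' s' t' hp'1 hp'2 (hcaus s' hs'le hs'ne) p₀ t₀ hp₀
            (by rw [hp₀1, hμss]) hp₀2
          rw [this, hμtt]
  intro p hp s t h1 h2 p₀ t₀ hp₀ hp₀1 hp₀2
  exact main _ p hp s t h1 h2 le_rfl p₀ t₀ hp₀ hp₀1 hp₀2

end SCtx

end AuxStrat3

section AuxStrat4

variable {S T GA GB GC : Type u}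
  {PS : ESP S} {PT : ESP T} {PA : ESP GA} {PB : ESP GB} {PC : ESP GC}
  {σ : S → GA ⊕ GB} {τ : T → GB ⊕ GC} {L : ES (S ⊕ GC)} {R : ES (GA ⊕ T)}

namespace SCtx

variable (ctx : SCtx PS PT PA PB PC σ τ L R)
include ctx

lemma down_ssubset {x : Set ((S ⊕ GC) × (GA ⊕ T))}
    (hx : x ∈ PbFam L R (compLeft σ) (compRight τ)) {p q : (S ⊕ GC) × (GA ⊕ T)}
    (hq : StepST PS.toES PT.toES x q p) :
    {r ∈ x | Relation.ReflTransGen (StepST PS.toES PT.toES x) r q} ⊂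
      {r ∈ x | Relation.ReflTransGen (StepST PS.toES PT.toES x) r p} := by
  refine ⟨fun r hr => ⟨hr.1, Relation.ReflTransGen.tail hr.2 hq⟩, fun hcl => ?_⟩
  have hpin := hcl ⟨hq.2.1, Relation.ReflTransGen.refl⟩
  have : p = q := ctx.rtg_antisymm hx hq.2.1 hq.1 hpin.2 (Relation.ReflTransGen.single hq)
  exact hq.2.2.1 (this ▸ rfl)

/-- Uniqueness of the minimal event below any event of the interaction. -/
lemma unique_min {μS : S → S} {μT : T → T} (hμS : MuSpec PS.toES μS)
    (hμT : MuSpec PT.toES μT) {x : Set ((S ⊕ GC) × (GA ⊕ T))}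
    (hx : x ∈ PbFam L R (compLeft σ) (compRight τ)) :
    ∀ {p : (S ⊕ GC) × (GA ⊕ T)}, p ∈ x → ∀ {k₁ k₂ : (S ⊕ GC) × (GA ⊕ T)},
      MinST PS.toES PT.toES x k₁ →
      Relation.ReflTransGen (StepST PS.toES PT.toES x) k₁ p →
      MinST PS.toES PT.toES x k₂ →
      Relation.ReflTransGen (StepST PS.toES PT.toES x) k₂ p → k₁ = k₂ := by
  have main : ∀ n : ℕ, ∀ p, p ∈ x →
      ({r ∈ x | Relation.ReflTransGen (StepST PS.toES PT.toES x) r p}).ncard ≤ n →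
      ∀ k₁ k₂, MinST PS.toES PT.toES x k₁ →
      Relation.ReflTransGen (StepST PS.toES PT.toES x) k₁ p →
      MinST PS.toES PT.toES x k₂ →
      Relation.ReflTransGen (StepST PS.toES PT.toES x) k₂ p → k₁ = k₂ := by
    intro n
    induction n with
    | zero =>
      intro p hp hcard
      exfalso
      have hne : ({r ∈ x | Relation.ReflTransGen (StepST PS.toES PT.toES x) r p}).Nonempty :=
        ⟨p, hp, Relation.ReflTransGen.refl⟩
      have hfin : ({r ∈ x | Relation.ReflTransGen (StepST PS.toES PT.toES x) r p}).Finite :=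
        (pb_finite hx).subset (fun z hz => hz.1)
      have := (Set.ncard_pos hfin).mpr hne
      omega
    | succ n ih =>
      intro p hp hcard k₁ k₂ hk₁ hr₁ hk₂ hr₂
      by_cases hmin : ∀ q, StepST PS.toES PT.toES x q p → False
      · rw [ctx.rtg_min_eq ⟨hp, hmin⟩ hr₁, ctx.rtg_min_eq ⟨hp, hmin⟩ hr₂]
      · -- a common bound below all the immediate predecessors of p
        have hbound : ∃ m, m ∈ x ∧ ∀ q, StepST PS.toES PT.toES x q p →
            Relation.ReflTransGen (StepST PS.toES PT.toES x) m q := by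
          rcases pb_shape hx hp with ⟨s, a, h1, h2, h3⟩ | ⟨s, t, b, h1, h2, h3, h4⟩ |
            ⟨c, t, h1, h2, h3⟩
          · -- p is a visible A-pair: all predecessors are S-steps
            obtain ⟨q₀, hq₀, hq₀1⟩ := pb_partner1 hx hp (l := Sum.inl (μS s))
              (by rw [h1]; exact (parES_le_inl ctx.hL).mpr (hμS s).1)
            refine ⟨q₀, hq₀, ?_⟩
            intro q hq
            rcases hq.2.2.2 with ⟨sp, sq, g1, g2, g3⟩ | ⟨tp, tq, g1, g2, g3⟩
            · rw [h1] at g2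
              have hsq : sq = s := (Sum.inl.inj g2).symm
              rw [hsq] at g3
              have hμ : μS sp = μS s := hμS.eq_of_le g3
              by_cases he : q₀ = q
              · exact he ▸ Relation.ReflTransGen.refl
              · exact Relation.ReflTransGen.single ⟨hq₀, hq.1, he,
                  Or.inl ⟨μS s, sp, hq₀1, g1, by rw [← hμ]; exact (hμS sp).1⟩⟩
            · rw [h2] at g2; cases g2
          · -- p is a synchronised pair
            obtain ⟨k, c, hkmin, hkrtg, hk1, hk2, hkc⟩ := ctx.t_origin hμT hx hp h2
            refine ⟨k, hkmin.1, ?_⟩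
            intro q hq
            rcases hq.2.2.2 with ⟨sp, sq, g1, g2, g3⟩ | ⟨tp, tq, g1, g2, g3⟩
            · -- an S-predecessor: route through the S-thread origin pair
              rw [h1] at g2
              have hsq : sq = s := (Sum.inl.inj g2).symm
              rw [hsq] at g3
              obtain ⟨p₀, hp₀, hp₀1⟩ := pb_partner1 hx hp (l := Sum.inl (μS s))
                (by rw [h1]; exact (parES_le_inl ctx.hL).mpr (hμS s).1)
              obtain ⟨t₀, hp₀2⟩ : ∃ t₀, p₀.2 = Sum.inr t₀ := by
                obtain ⟨b₀, hσm, _⟩ := ctx.hσmin (μS s) (hμS s).2.1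
                rcases pb_shape hx hp₀ with ⟨s₁, a₁, g1', g2', g3'⟩ |
                  ⟨s₁, t₁, b₁, g1', g2', g3', g4'⟩ | ⟨c₁, t₁, g1', g2', g3'⟩
                · exfalso
                  rw [hp₀1] at g1'
                  have : s₁ = μS s := (Sum.inl.inj g1').symm
                  rw [this, hσm] at g3'; cases g3'
                · exact ⟨t₁, g2'⟩
                · rw [hp₀1] at g1'; cases g1'
              have hlink : μT t₀ = μT t :=
                ctx.link hμS hμT hx hp h1 h2 hp₀ hp₀1 hp₀2
              have hkp₀ : Relation.ReflTransGen (StepST PS.toES PT.toES x) k p₀ := by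
                by_cases he : k = p₀
                · exact he ▸ Relation.ReflTransGen.refl
                · exact Relation.ReflTransGen.single ⟨hkmin.1, hp₀, he,
                    Or.inr ⟨μT t, t₀, hk2, hp₀2, by rw [← hlink]; exact (hμT t₀).1⟩⟩
              have hp₀q : Relation.ReflTransGen (StepST PS.toES PT.toES x) p₀ q := by
                by_cases he : p₀ = q
                · exact he ▸ Relation.ReflTransGen.refl
                · refine Relation.ReflTransGen.single ⟨hp₀, hq.1, he,
                    Or.inl ⟨μS s, sp, hp₀1, g1, ?_⟩⟩
                  rw [← hμS.eq_of_le g3]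
                  exact (hμS sp).1
              exact hkp₀.trans hp₀q
            · -- a T-predecessor
              rw [h2] at g2
              have htq : tq = t := (Sum.inr.inj g2).symm
              rw [htq] at g3
              by_cases he : k = q
              · exact he ▸ Relation.ReflTransGen.refl
              · refine Relation.ReflTransGen.single ⟨hkmin.1, hq.1, he,
                  Or.inr ⟨μT t, tp, hk2, g1, ?_⟩⟩
                rw [← hμT.eq_of_le g3]
                exact (hμT tp).1
          · -- p is a visible C-pair: all predecessors are T-steps
            obtain ⟨k, c', hkmin, hkrtg, hk1, hk2, hkc⟩ := ctx.t_origin hμT hx hp h2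
            refine ⟨k, hkmin.1, ?_⟩
            intro q hq
            rcases hq.2.2.2 with ⟨sp, sq, g1, g2, g3⟩ | ⟨tp, tq, g1, g2, g3⟩
            · rw [h1] at g2; cases g2
            · rw [h2] at g2
              have htq : tq = t := (Sum.inr.inj g2).symm
              rw [htq] at g3
              by_cases he : k = q
              · exact he ▸ Relation.ReflTransGen.refl
              · refine Relation.ReflTransGen.single ⟨hkmin.1, hq.1, he,
                  Or.inr ⟨μT t, tp, hk2, g1, ?_⟩⟩
                rw [← hμT.eq_of_le g3]
                exact (hμT tp).1
        obtain ⟨m, hm, hmq⟩ := hbound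
        have htail : ∀ k, MinST PS.toES PT.toES x k →
            Relation.ReflTransGen (StepST PS.toES PT.toES x) k p →
            ∃ q, Relation.ReflTransGen (StepST PS.toES PT.toES x) k q ∧
              StepST PS.toES PT.toES x q p := by
          intro k hk hr
          rcases Relation.ReflTransGen.cases_tail hr with he | ⟨q, hh1, hh2⟩
          · exact absurd (fun q hq => hk.2 q (by rw [he] at hq; exact hq)) hmin
          · exact ⟨q, hh1, hh2⟩
        obtain ⟨q₁, hr₁', hs₁⟩ := htail k₁ hk₁ hr₁
        obtain ⟨q₂, hr₂', hs₂⟩ := htail k₂ hk₂ hr₂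
        obtain ⟨k₀, hk₀, hk₀m⟩ := ctx.min_exists hx hm
        have hfin : ({r ∈ x | Relation.ReflTransGen (StepST PS.toES PT.toES x) r p}).Finite :=
          (pb_finite hx).subset (fun z hz => hz.1)
        have hc₁ : ({r ∈ x | Relation.ReflTransGen (StepST PS.toES PT.toES x) r q₁}).ncard ≤ n := by
          have := Set.ncard_lt_ncard (ctx.down_ssubset hx hs₁) hfin
          omega
        have hc₂ : ({r ∈ x | Relation.ReflTransGen (StepST PS.toES PT.toES x) r q₂}).ncard ≤ n := by
          have := Set.ncard_lt_ncard (ctx.down_ssubset hx hs₂) hfin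
          omega
        have e₁ : k₁ = k₀ := ih q₁ hs₁.1 hc₁ k₁ k₀ hk₁ hr₁' hk₀ (hk₀m.trans (hmq q₁ hs₁))
        have e₂ : k₂ = k₀ := ih q₂ hs₂.1 hc₂ k₂ k₀ hk₂ hr₂' hk₀ (hk₀m.trans (hmq q₂ hs₂))
        rw [e₁, e₂]
  intro p hp k₁ k₂ h1 h2 h3 h4
  exact main _ p hp le_rfl k₁ k₂ h1 h2 h3 h4

end SCtx

end AuxStrat4

section AuxStrat5

variable {S T GA GB GC : Type u}
  {PS : ESP S} {PT : ESP T} {PA : ESP GA} {PB : ESP GB} {PC : ESP GC}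
  {σ : S → GA ⊕ GB} {τ : T → GB ⊕ GC} {L : ES (S ⊕ GC)} {R : ES (GA ⊕ T)}

namespace SCtx

variable (ctx : SCtx PS PT PA PB PC σ τ L R)
include ctx

/-- If the `S`-parts and the `T`-parts of two members are jointly consistent, the
union of the members is a member. -/
lemma union_mem {z₁ z₂ : Set ((S ⊕ GC) × (GA ⊕ T))}
    (hz₁ : z₁ ∈ PbFam L R (compLeft σ) (compRight τ))
    (hz₂ : z₂ ∈ PbFam L R (compLeft σ) (compRight τ))
    (hS : (Sum.inl ⁻¹' (Prod.fst '' z₁)) ∪ (Sum.inl ⁻¹' (Prod.fst '' z₂)) ∈ PS.Con)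
    (hT : (Sum.inr ⁻¹' (Prod.snd '' z₁)) ∪ (Sum.inr ⁻¹' (Prod.snd '' z₂)) ∈ PT.Con) :
    z₁ ∪ z₂ ∈ PbFam L R (compLeft σ) (compRight τ) := by
  have hYS : Config PS.toES ((Sum.inl ⁻¹' (Prod.fst '' z₁)) ∪ (Sum.inl ⁻¹' (Prod.fst '' z₂))) := by
    refine ⟨hS, ?_⟩
    rintro e (he | he) e' hle
    · exact Or.inl ((ctx.Scfg hz₁).2 he hle)
    · exact Or.inr ((ctx.Scfg hz₂).2 he hle)
  have hYT : Config PT.toES ((Sum.inr ⁻¹' (Prod.snd '' z₁)) ∪ (Sum.inr ⁻¹' (Prod.snd '' z₂))) := by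
    refine ⟨hT, ?_⟩
    rintro e (he | he) e' hle
    · exact Or.inl ((ctx.Tcfg hz₁).2 he hle)
    · exact Or.inr ((ctx.Tcfg hz₂).2 he hle)
  have hshape : ∀ {p}, p ∈ z₁ ∪ z₂ →
      (∃ s a, p.1 = Sum.inl s ∧ p.2 = Sum.inl a ∧ σ s = Sum.inl a) ∨
      (∃ s t b, p.1 = Sum.inl s ∧ p.2 = Sum.inr t ∧ σ s = Sum.inr b ∧ τ t = Sum.inl b) ∨
      (∃ c t, p.1 = Sum.inr c ∧ p.2 = Sum.inr t ∧ τ t = Sum.inr c) := by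
    intro p hp
    rcases hp with h | h
    exacts [pb_shape hz₁ h, pb_shape hz₂ h]
  have hmemT : ∀ {p}, p ∈ z₁ ∪ z₂ → ∀ {t}, p.2 = Sum.inr t →
      t ∈ (Sum.inr ⁻¹' (Prod.snd '' z₁)) ∪ (Sum.inr ⁻¹' (Prod.snd '' z₂)) := by
    rintro p (hp | hp) t ht
    exacts [Or.inl ⟨p, hp, ht⟩, Or.inr ⟨p, hp, ht⟩]
  have hmemS : ∀ {p}, p ∈ z₁ ∪ z₂ → ∀ {s}, p.1 = Sum.inl s →
      s ∈ (Sum.inl ⁻¹' (Prod.fst '' z₁)) ∪ (Sum.inl ⁻¹' (Prod.fst '' z₂)) := by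
    rintro p (hp | hp) s hs
    exacts [Or.inl ⟨p, hp, hs⟩, Or.inr ⟨p, hp, hs⟩]
  have hτeq : ∀ {p}, p ∈ z₁ ∪ z₂ → ∀ {q}, q ∈ z₁ ∪ z₂ → ∀ {t t'},
      p.2 = Sum.inr t → q.2 = Sum.inr t' → τ t = τ t' → p.2 = q.2 := by
    intro p hp q hq t t' ht ht' heq
    have := ctx.hτinj _ hYT t (hmemT hp ht) t' (hmemT hq ht') heq
    rw [ht, ht', this]
  have hσeq : ∀ {p}, p ∈ z₁ ∪ z₂ → ∀ {q}, q ∈ z₁ ∪ z₂ → ∀ {s s'},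
      p.1 = Sum.inl s → q.1 = Sum.inl s' → σ s = σ s' → p.1 = q.1 := by
    intro p hp q hq s s' hs hs' heq
    have := ctx.hσinj _ hYS s (hmemS hp hs) s' (hmemS hq hs') heq
    rw [hs, hs', this]
  have hfin : (z₁ ∪ z₂).Finite := (pb_finite hz₁).union (pb_finite hz₂)
  have himg1 : Prod.fst '' (z₁ ∪ z₂) = (Prod.fst '' z₁) ∪ (Prod.fst '' z₂) :=
    Set.image_union _ _ _
  have himg2 : Prod.snd '' (z₁ ∪ z₂) = (Prod.snd '' z₁) ∪ (Prod.snd '' z₂) :=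
    Set.image_union _ _ _
  have hcfg1 : Config L (Prod.fst '' (z₁ ∪ z₂)) := by
    rw [himg1]
    constructor
    · refine (ctx.hL.2 _).mpr ⟨((pb_finite hz₁).image _).union ((pb_finite hz₂).image _), ?_, ?_⟩
      · rw [Set.preimage_union]
        exact hS
      · rw [Set.preimage_union]
        refine PC.con_mono ?_ (ctx.hτC_con _ hYT)
        rintro c (⟨p, hp, hp1⟩ | ⟨p, hp, hp1⟩)
        · rcases pb_shape hz₁ hp with ⟨s, a, h1, h2, h3⟩ | ⟨s, t, b, h1, h2, h3, h4⟩ |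
            ⟨c', t, h1, h2, h3⟩
          · rw [h1] at hp1; cases hp1
          · rw [h1] at hp1; cases hp1
          · rw [h1] at hp1
            have : c' = c := Sum.inr.inj hp1
            exact ⟨t, hmemT (Or.inl hp) h2, by rw [h3, this]⟩
        · rcases pb_shape hz₂ hp with ⟨s, a, h1, h2, h3⟩ | ⟨s, t, b, h1, h2, h3, h4⟩ |
            ⟨c', t, h1, h2, h3⟩
          · rw [h1] at hp1; cases hp1
          · rw [h1] at hp1; cases hp1
          · rw [h1] at hp1
            have : c' = c := Sum.inr.inj hp1
            exact ⟨t, hmemT (Or.inr hp) h2, by rw [h3, this]⟩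
    · rintro e (he | he) e' hle
      · exact Or.inl ((pb_cfg1 hz₁).2 he hle)
      · exact Or.inr ((pb_cfg1 hz₂).2 he hle)
  have hcfg2 : Config R (Prod.snd '' (z₁ ∪ z₂)) := by
    rw [himg2]
    constructor
    · refine (ctx.hR.2 _).mpr ⟨((pb_finite hz₁).image _).union ((pb_finite hz₂).image _), ?_, ?_⟩
      · rw [Set.preimage_union]
        refine PA.con_mono ?_ (ctx.hσA_con _ hYS)
        rintro a (⟨p, hp, hp2⟩ | ⟨p, hp, hp2⟩)
        · rcases pb_shape hz₁ hp with ⟨s, a', h1, h2, h3⟩ | ⟨s, t, b, h1, h2, h3, h4⟩ |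
            ⟨c', t, h1, h2, h3⟩
          · rw [h2] at hp2
            have : a' = a := Sum.inl.inj hp2
            exact ⟨s, hmemS (Or.inl hp) h1, by rw [h3, this]⟩
          · rw [h2] at hp2; cases hp2
          · rw [h2] at hp2; cases hp2
        · rcases pb_shape hz₂ hp with ⟨s, a', h1, h2, h3⟩ | ⟨s, t, b, h1, h2, h3, h4⟩ |
            ⟨c', t, h1, h2, h3⟩
          · rw [h2] at hp2
            have : a' = a := Sum.inl.inj hp2
            exact ⟨s, hmemS (Or.inr hp) h1, by rw [h3, this]⟩
          · rw [h2] at hp2; cases hp2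
          · rw [h2] at hp2; cases hp2
      · rw [Set.preimage_union]
        exact hT
    · rintro e (he | he) e' hle
      · exact Or.inl ((pb_cfg2 hz₁).2 he hle)
      · exact Or.inr ((pb_cfg2 hz₂).2 he hle)
  have hinj1 : ∀ p ∈ z₁ ∪ z₂, ∀ q ∈ z₁ ∪ z₂, p.1 = q.1 → p = q := by
    intro p hp q hq hpq
    rcases hshape hp with ⟨s, a, h1, h2, h3⟩ | ⟨s, t, b, h1, h2, h3, h4⟩ | ⟨c, t, h1, h2, h3⟩ <;>
      rcases hshape hq with ⟨s', a', g1, g2, g3⟩ | ⟨s', t', b', g1, g2, g3, g4⟩ |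
        ⟨c', t', g1, g2, g3⟩
    · have hss : s = s' := by rw [h1, g1] at hpq; exact Sum.inl.inj hpq
      rw [hss, g3] at h3
      have haa : a = a' := Sum.inl.inj h3.symm
      exact Prod.ext hpq (by rw [h2, g2, haa])
    · exfalso
      have hss : s = s' := by rw [h1, g1] at hpq; exact Sum.inl.inj hpq
      rw [hss, g3] at h3
      cases h3
    · exfalso; rw [h1, g1] at hpq; cases hpq
    · exfalso
      have hss : s = s' := by rw [h1, g1] at hpq; exact Sum.inl.inj hpq
      rw [hss, g3] at h3
      cases h3
    · have hss : s = s' := by rw [h1, g1] at hpq; exact Sum.inl.inj hpq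
      rw [hss, g3] at h3
      have hbb : b = b' := Sum.inr.inj h3.symm
      refine Prod.ext hpq (hτeq hp hq h2 g2 ?_)
      rw [h4, g4, hbb]
    · exfalso; rw [h1, g1] at hpq; cases hpq
    · exfalso; rw [h1, g1] at hpq; cases hpq
    · exfalso; rw [h1, g1] at hpq; cases hpq
    · have hcc : c = c' := by rw [h1, g1] at hpq; exact Sum.inr.inj hpq
      refine Prod.ext hpq (hτeq hp hq h2 g2 ?_)
      rw [h3, g3, hcc]
  have hinj2 : ∀ p ∈ z₁ ∪ z₂, ∀ q ∈ z₁ ∪ z₂, p.2 = q.2 → p = q := by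
    intro p hp q hq hpq
    rcases hshape hp with ⟨s, a, h1, h2, h3⟩ | ⟨s, t, b, h1, h2, h3, h4⟩ | ⟨c, t, h1, h2, h3⟩ <;>
      rcases hshape hq with ⟨s', a', g1, g2, g3⟩ | ⟨s', t', b', g1, g2, g3, g4⟩ |
        ⟨c', t', g1, g2, g3⟩
    · have haa : a = a' := by rw [h2, g2] at hpq; exact Sum.inl.inj hpq
      refine Prod.ext (hσeq hp hq h1 g1 ?_) hpq
      rw [h3, g3, haa]
    · exfalso; rw [h2, g2] at hpq; cases hpq
    · exfalso; rw [h2, g2] at hpq; cases hpq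
    · exfalso; rw [h2, g2] at hpq; cases hpq
    · have htt : t = t' := by rw [h2, g2] at hpq; exact Sum.inr.inj hpq
      rw [htt, g4] at h4
      have hbb : b = b' := Sum.inl.inj h4.symm
      refine Prod.ext (hσeq hp hq h1 g1 ?_) hpq
      rw [h3, g3, hbb]
    · exfalso
      have htt : t = t' := by rw [h2, g2] at hpq; exact Sum.inr.inj hpq
      rw [htt, g3] at h4
      cases h4
    · exfalso; rw [h2, g2] at hpq; cases hpq
    · exfalso
      have htt : t = t' := by rw [h2, g2] at hpq; exact Sum.inr.inj hpq
      rw [htt, g4] at h3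
      cases h3
    · have htt : t = t' := by rw [h2, g2] at hpq; exact Sum.inr.inj hpq
      rw [htt, g3] at h3
      have hcc : c = c' := Sum.inr.inj h3.symm
      exact Prod.ext (by rw [h1, g1, hcc]) hpq
  have hsep : ∀ p ∈ z₁ ∪ z₂, ∀ q ∈ z₁ ∪ z₂, p ≠ q → ∃ y ⊆ z₁ ∪ z₂,
      Config L (Prod.fst '' y) ∧ Config R (Prod.snd '' y) ∧ (p ∈ y ↔ q ∉ y) := by
    intro p hp q hq hne
    by_cases hp1 : p ∈ z₁ <;> by_cases hq1 : q ∈ z₁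
    · obtain ⟨y, hy, c1, c2, hiff⟩ := pb_sep hz₁ p hp1 q hq1 hne
      exact ⟨y, hy.trans Set.subset_union_left, c1, c2, hiff⟩
    · exact ⟨z₁, Set.subset_union_left, pb_cfg1 hz₁, pb_cfg2 hz₁,
        iff_of_true hp1 hq1⟩
    · have hp2 : p ∈ z₂ := hp.resolve_left hp1
      by_cases hq2 : q ∈ z₂
      · obtain ⟨y, hy, c1, c2, hiff⟩ := pb_sep hz₂ p hp2 q hq2 hne
        exact ⟨y, hy.trans Set.subset_union_right, c1, c2, hiff⟩
      · exact ⟨z₂, Set.subset_union_right, pb_cfg1 hz₂, pb_cfg2 hz₂,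
          iff_of_true hp2 hq2⟩
    · have hp2 : p ∈ z₂ := hp.resolve_left hp1
      have hq2 : q ∈ z₂ := hq.resolve_left hq1
      obtain ⟨y, hy, c1, c2, hiff⟩ := pb_sep hz₂ p hp2 q hq2 hne
      exact ⟨y, hy.trans Set.subset_union_right, c1, c2, hiff⟩
  refine ⟨⟨hfin, hcfg1, hcfg2, hinj1, hinj2, hsep⟩, ?_⟩
  rintro p (hp | hp)
  exacts [pb_match hz₁ p hp, pb_match hz₂ p hp]

end SCtx

end AuxStrat5

/-- composition of negative single-threaded ∼-strategies on negative
thin concurrent games is negative and single-threaded. -/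
theorem statement18 {S T GA GB GC : Type u}
    (PS : ESP S) (PT : ESP T) (PA : ESP GA) (PB : ESP GB) (PC : ESP GC)
    (SS : Set (Rel2 S)) (ST : Set (Rel2 T))
    (SA : Set (Rel2 GA)) (SB : Set (Rel2 GB)) (SC : Set (Rel2 GC))
    (hA : IsTCG PA SA) (hB : IsTCG PB SB) (hC : IsTCG PC SC)
    (hnA : NegativeESP PA) (hnB : NegativeESP PB) (hnC : NegativeESP PC)
    (GAB : ESP (GA ⊕ GB)) (hGAB : IsParESP PA.dual PB GAB)
    (GBC : ESP (GB ⊕ GC)) (hGBC : IsParESP PB.dual PC GBC)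
    (GAC : ESP (GA ⊕ GC)) (hGAC : IsParESP PA.dual PC GAC)
    (σ : S → GA ⊕ GB) (τ : T → GB ⊕ GC)
    (hσ : IsSimStrategy PS SS GAB (parFam SA SB) σ)
    (hτ : IsSimStrategy PT ST GBC (parFam SB SC) τ)
    (hnS : NegativeESP PS) (hstS : SingleThreaded PS.toES)
    (hnT : NegativeESP PT) (hstT : SingleThreaded PT.toES)
    (w : CompWitness PS PT PA PC σ τ) :
    NegativeESP w.Comp ∧ SingleThreaded w.Comp.toES := by
  classical
  obtain ⟨hσmap, hσfam, hσiso, hσpolfam, hσcourt, hσrec, hσthin⟩ := hσ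
  obtain ⟨hτmap, hτfam, hτiso, hτpolfam, hτcourt, hτrec, hτthin⟩ := hτ
  obtain ⟨⟨hσcfg, hσlinj⟩, hσpol⟩ := hσmap
  obtain ⟨⟨hτcfg, hτlinj⟩, hτpol⟩ := hτmap
  -- thread-origin functions
  choose μS hμS using hstS.1
  choose μT hμT using hstT.1
  have hμSspec : MuSpec PS.toES μS := fun s =>
    ⟨(hμS s).1.1, (hμS s).1.2, fun m h1 h2 => (hμS s).2 m ⟨h1, h2⟩⟩
  have hμTspec : MuSpec PT.toES μT := fun t =>
    ⟨(hμT t).1.1, (hμT t).1.2, fun m h1 h2 => (hμT t).2 m ⟨h1, h2⟩⟩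
  -- construct the pre-digested context
  have hGABparES : IsParES PA.toES PB.toES GAB.toES := hGAB.1
  have hGBCparES : IsParES PB.toES PC.toES GBC.toES := hGBC.1
  have hσminF : ∀ s, IsMinimal PS.toES s → ∃ b, σ s = Sum.inr b ∧ IsMinimal PB.toES b := by
    intro s hs
    have hgm := map_min ⟨hσcfg, hσlinj⟩ hs
    rcases hσs : σ s with a | b
    · exfalso
      rw [hσs] at hgm
      have hamin : IsMinimal PA.toES a := fun a' hle =>
        Sum.inl.inj (hgm (Sum.inl a') ((parES_le_inl hGABparES).mpr hle))
      have hpa := hnA a hamin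
      have h1 : GAB.pol (Sum.inl a) = !PA.pol a := hGAB.2.1 a
      have h2 : GAB.pol (σ s) = PS.pol s := hσpol s
      have h3 : PS.pol s = false := hnS s hs
      rw [hσs, h1, hpa, h3] at h2
      simp at h2
    · rw [hσs] at hgm
      exact ⟨b, rfl, fun b' hle =>
        Sum.inr.inj (hgm (Sum.inr b') ((parES_le_inr hGABparES).mpr hle))⟩
  have hτminF : ∀ t, IsMinimal PT.toES t → ∃ c, τ t = Sum.inr c ∧ IsMinimal PC.toES c ∧
      PC.pol c = false := by
    intro t ht
    have hgm := map_min ⟨hτcfg, hτlinj⟩ ht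
    rcases hτt : τ t with b | c
    · exfalso
      rw [hτt] at hgm
      have hbmin : IsMinimal PB.toES b := fun b' hle =>
        Sum.inl.inj (hgm (Sum.inl b') ((parES_le_inl hGBCparES).mpr hle))
      have hpb := hnB b hbmin
      have h1 : GBC.pol (Sum.inl b) = !PB.pol b := hGBC.2.1 b
      have h2 : GBC.pol (τ t) = PT.pol t := hτpol t
      have h3 : PT.pol t = false := hnT t ht
      rw [hτt, h1, hpb, h3] at h2
      simp at h2
    · rw [hτt] at hgm
      have hcmin : IsMinimal PC.toES c := fun c' hle =>
        Sum.inr.inj (hgm (Sum.inr c') ((parES_le_inr hGBCparES).mpr hle))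
      have h1 : GBC.pol (Sum.inr c) = PC.pol c := hGBC.2.2 c
      have h2 : GBC.pol (τ t) = PT.pol t := hτpol t
      have h3 : PT.pol t = false := hnT t ht
      rw [hτt, h1, h3] at h2
      exact ⟨c, rfl, hcmin, h2⟩
  have hσcourtB : ∀ s' s b, Imm PS.toES s' s → PS.pol s = false → σ s = Sum.inr b →
      ∃ b', σ s' = Sum.inr b' ∧ PB.le b' b ∧ b' ≠ b := by
    intro s' s b himm hpol hσs
    obtain ⟨⟨hle, hne⟩, -⟩ := hσcourt s' s himm (Or.inr hpol)
    rw [hσs] at hle hne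
    rcases hσ' : σ s' with a' | b'
    · exfalso
      rw [hσ', hGABparES.1] at hle
      cases hle
    · rw [hσ'] at hle hne
      exact ⟨b', rfl, (parES_le_inr hGABparES).mp hle, fun hh => hne (by rw [hh])⟩
  have hτcourtB : ∀ t' t b, Imm PT.toES t' t → PT.pol t = false → τ t = Sum.inl b →
      ∃ b', τ t' = Sum.inl b' ∧ PB.le b' b ∧ b' ≠ b := by
    intro t' t b himm hpol hτt
    obtain ⟨⟨hle, hne⟩, -⟩ := hτcourt t' t himm (Or.inr hpol)
    rw [hτt] at hle hne
    rcases hτ' : τ t' with b' | c'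
    · rw [hτ'] at hle hne
      exact ⟨b', rfl, (parES_le_inl hGBCparES).mp hle, fun hh => hne (by rw [hh])⟩
    · exfalso
      rw [hτ', hGBCparES.1] at hle
      cases hle
  have hσimgA : ∀ s a' a, σ s = Sum.inl a → PA.le a' a →
      ∃ s', PS.le s' s ∧ σ s' = Sum.inl a' := by
    intro s a' a hσs hle
    have hcfg := hσcfg _ (downset_config PS.toES s)
    have hmem : Sum.inl a ∈ σ '' {e' | PS.le e' s} := ⟨s, PS.le_refl s, hσs⟩
    obtain ⟨s', hs', hσs'⟩ := hcfg.2 hmem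
      (show GAB.le (Sum.inl a') (Sum.inl a) from (parES_le_inl hGABparES).mpr hle)
    exact ⟨s', hs', hσs'⟩
  have hσimgB : ∀ s b' b, σ s = Sum.inr b → PB.le b' b →
      ∃ s', PS.le s' s ∧ σ s' = Sum.inr b' := by
    intro s b' b hσs hle
    have hcfg := hσcfg _ (downset_config PS.toES s)
    have hmem : Sum.inr b ∈ σ '' {e' | PS.le e' s} := ⟨s, PS.le_refl s, hσs⟩
    obtain ⟨s', hs', hσs'⟩ := hcfg.2 hmem
      (show GAB.le (Sum.inr b') (Sum.inr b) from (parES_le_inr hGABparES).mpr hle)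
    exact ⟨s', hs', hσs'⟩
  have hτimgB : ∀ t b' b, τ t = Sum.inl b → PB.le b' b →
      ∃ t', PT.le t' t ∧ τ t' = Sum.inl b' := by
    intro t b' b hτt hle
    have hcfg := hτcfg _ (downset_config PT.toES t)
    have hmem : Sum.inl b ∈ τ '' {e' | PT.le e' t} := ⟨t, PT.le_refl t, hτt⟩
    obtain ⟨t', ht', hτt'⟩ := hcfg.2 hmem
      (show GBC.le (Sum.inl b') (Sum.inl b) from (parES_le_inl hGBCparES).mpr hle)
    exact ⟨t', ht', hτt'⟩
  have hτimgC : ∀ t c' c, τ t = Sum.inr c → PC.le c' c →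
      ∃ t', PT.le t' t ∧ τ t' = Sum.inr c' := by
    intro t c' c hτt hle
    have hcfg := hτcfg _ (downset_config PT.toES t)
    have hmem : Sum.inr c ∈ τ '' {e' | PT.le e' t} := ⟨t, PT.le_refl t, hτt⟩
    obtain ⟨t', ht', hτt'⟩ := hcfg.2 hmem
      (show GBC.le (Sum.inr c') (Sum.inr c) from (parES_le_inr hGBCparES).mpr hle)
    exact ⟨t', ht', hτt'⟩
  have hτC_con : ∀ Y, Config PT.toES Y → {c | Sum.inr c ∈ τ '' Y} ∈ PC.Con := by
    intro Y hY
    exact ((hGBCparES.2 _).mp (hτcfg Y hY).1).2.2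
  have hσA_con : ∀ Y, Config PS.toES Y → {a | Sum.inl a ∈ σ '' Y} ∈ PA.Con := by
    intro Y hY
    exact ((hGABparES.2 _).mp (hσcfg Y hY).1).2.1
  have hpolS : ∀ s b, σ s = Sum.inr b → PS.pol s = PB.pol b := by
    intro s b hσs
    have h := hσpol s
    rw [hσs] at h
    exact h.symm.trans (hGAB.2.2 b)
  have hpolT : ∀ t b, τ t = Sum.inl b → PT.pol t = !PB.pol b := by
    intro t b hτt
    have h := hτpol t
    rw [hτt] at h
    exact h.symm.trans (hGBC.2.1 b)
  have ctx : SCtx PS PT PA PB PC σ τ w.L w.R :=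
    ⟨w.hL, w.hR, hσminF, hτminF, hσcourtB, hτcourtB, hσimgA, hσimgB, hτimgB, hτimgC,
     hσlinj, hτlinj, hτC_con, hσA_con, hpolS, hpolT, hstS, hstT⟩
  -- visibility of C-pairs
  have hvisE : ∀ (k : (S ⊕ GC) × (GA ⊕ T)) (c : GC), k.1 = Sum.inr c → VisE σ k := by
    intro k c hk
    unfold VisE
    rw [hk]
    simp [compLeft, outAC]
  -- building an event of the composition from a minimal pair of a member
  have hmk : ∀ {x k}, x ∈ PbFam w.L w.R (compLeft σ) (compRight τ) →
      MinST PS.toES PT.toES x k →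
      VisP (PbFam w.L w.R (compLeft σ) (compRight τ)) σ ({k} : Set _) := by
    intro x k hx hk
    obtain ⟨c, t, hk1, hk2, hτt, htm, hcm, hcp⟩ := ctx.min_shape hx hk
    exact ⟨k, ⟨x, hx, hk.1, (ctx.min_prime_singleton hx hk).symm⟩, hvisE k c hk1⟩
  constructor
  · -- negativity
    intro p hpmin
    obtain ⟨e, ⟨x, hx, hex, hpe⟩, hvis⟩ := p.2
    obtain ⟨k, hkmin, hkrtg⟩ := ctx.min_exists hx hex
    have hm := hmk hx hkmin
    have hlemp : w.Comp.le ⟨{k}, hm⟩ p := by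
      rw [w.hle]
      intro u hu
      have huk : u = k := hu
      rw [huk]
      show k ∈ p.1
      rw [hpe]
      exact ⟨hkmin.1, famle_of_rtg hx (ctx.rtg_cstep_of_step hkrtg)⟩
    have heq := hpmin _ hlemp
    have hp1 : p.1 = {k} := by rw [← heq]
    have hek : e = k := by
      have h1 : e ∈ p.1 := by rw [hpe]; exact mem_famprime_self hex
      rw [hp1] at h1
      exact h1
    obtain ⟨c, t, hk1, hk2, hτt, htm, hcm, hcp⟩ := ctx.min_shape hx hkmin
    have hco := w.hco p e ⟨x, hx, hex, hpe⟩
    rw [hek, hk1] at hco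
    have houtac : outAC (compLeft σ (Sum.inr c) : (GA ⊕ GB) ⊕ GC) = some (Sum.inr c) := by
      simp [compLeft, outAC]
    rw [houtac] at hco
    have hcop : w.co p = Sum.inr c := (Option.some.inj hco).symm
    rw [w.hpol p, hcop]
    simpa using hcp
  constructor
  · -- unique minimal event below every event of the composition
    intro p
    obtain ⟨e, ⟨x, hx, hex, hpe⟩, hvis⟩ := p.2
    obtain ⟨k, hkmin, hkrtg⟩ := ctx.min_exists hx hex
    have hm := hmk hx hkmin
    refine ⟨⟨{k}, hm⟩, ⟨?_, ?_⟩, ?_⟩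
    · rw [w.hle]
      intro u hu
      have huk : u = k := hu
      rw [huk]
      show k ∈ p.1
      rw [hpe]
      exact ⟨hkmin.1, famle_of_rtg hx (ctx.rtg_cstep_of_step hkrtg)⟩
    · -- minimality
      intro q hq
      rw [w.hle] at hq
      obtain ⟨e', ⟨y, hy, hey, hqe⟩, hvis'⟩ := q.2
      have he' : e' ∈ q.1 := by rw [hqe]; exact mem_famprime_self hey
      have hek' : e' = k := hq he'
      apply Subtype.ext
      apply Set.Subset.antisymm hq
      intro u hu
      have huk : u = k := hu
      rw [huk, ← hek']
      exact he'
    · -- uniqueness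
      rintro y ⟨hyle, hymin⟩
      rw [w.hle] at hyle
      obtain ⟨ey, ⟨yam, hyam, heyam, hye⟩, hyvis⟩ := y.2
      have hysub : y.1 ⊆ x := by
        intro u hu
        have := hyle hu
        rw [hpe] at this
        exact this.1
      have hyx : y.1 = FamPrime (PbFam w.L w.R (compLeft σ) (compRight τ)) x ey := by
        rw [hye]
        exact prime_retarget hyam hx heyam (by rw [← hye]; exact hysub)
      have heyy : ey ∈ y.1 := by rw [hye]; exact mem_famprime_self heyam
      have heyx : ey ∈ x := hysub heyy
      have hrtg_ey : Relation.ReflTransGen (StepST PS.toES PT.toES x) ey e := by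
        have h1 : ey ∈ p.1 := hyle heyy
        rw [hpe] at h1
        exact ctx.rtg_step_of_cstep hx (rtg_of_famle hx heyx hex h1.2)
      obtain ⟨k', hk'min, hk'rtg⟩ := ctx.min_exists hx heyx
      have hm' := hmk hx hk'min
      have hle' : w.Comp.le ⟨{k'}, hm'⟩ y := by
        rw [w.hle]
        intro u hu
        have huk : u = k' := hu
        rw [huk]
        show k' ∈ y.1
        rw [hyx]
        exact ⟨hk'min.1, famle_of_rtg hx (ctx.rtg_cstep_of_step hk'rtg)⟩
      have heq' := hymin _ hle'
      have hy1 : y.1 = {k'} := by rw [← heq']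
      have hek' : ey = k' := by
        have := heyy
        rw [hy1] at this
        exact this
      have hkk : k' = k := ctx.unique_min hμSspec hμTspec hx hex hk'min
        (hek' ▸ hrtg_ey) hkmin hkrtg
      apply Subtype.ext
      rw [hy1, hkk]
  · -- common cause of incompatible covers
    intro X P₁ P₂ hcov1 hcov2 hbad
    obtain ⟨hXfin, hz⟩ := (w.hcon X).mp hcov1.1.1
    obtain ⟨hfin1, hz₁⟩ := (w.hcon _).mp hcov1.2.2.1
    obtain ⟨hfin2, hz₂⟩ := (w.hcon _).mp hcov2.2.2.1
    rw [Set.image_insert_eq, Set.sUnion_insert] at hz₁ hz₂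
    -- the union is not a member
    have hsub₁ : insert P₁ X ⊆ insert P₁ (insert P₂ X) := by
      rintro u (rfl | hu)
      · exact Set.mem_insert _ _
      · exact Set.mem_insert_of_mem _ (Set.mem_insert_of_mem _ hu)
    have hsub₂ : insert P₂ X ⊆ insert P₁ (insert P₂ X) := by
      rintro u (rfl | hu)
      · exact Set.mem_insert_of_mem _ (Set.mem_insert _ _)
      · exact Set.mem_insert_of_mem _ (Set.mem_insert_of_mem _ hu)
    have hnotcon : insert P₁ (insert P₂ X) ∉ w.Comp.Con := by
      intro hcon
      apply hbad
      refine ⟨hcon, ?_⟩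
      rintro q (rfl | rfl | hq) q' hle
      · exact hsub₁ (hcov1.2.2.2 (Set.mem_insert _ _) hle)
      · exact hsub₂ (hcov2.2.2.2 (Set.mem_insert _ _) hle)
      · exact Set.mem_insert_of_mem _ (Set.mem_insert_of_mem _ (hcov1.1.2 hq hle))
    have hUnot : (P₁.1 ∪ ⋃₀ (Subtype.val '' X)) ∪ (P₂.1 ∪ ⋃₀ (Subtype.val '' X)) ∉
        PbFam w.L w.R (compLeft σ) (compRight τ) := by
      intro hmem
      apply hnotcon
      rw [w.hcon]
      refine ⟨(hXfin.insert _).insert _, ?_⟩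
      have himg : ⋃₀ (Subtype.val '' insert P₁ (insert P₂ X)) =
          (P₁.1 ∪ ⋃₀ (Subtype.val '' X)) ∪ (P₂.1 ∪ ⋃₀ (Subtype.val '' X)) := by
        rw [Set.image_insert_eq, Set.sUnion_insert, Set.image_insert_eq, Set.sUnion_insert]
        ext u
        constructor
        · rintro (h | h | h)
          · exact Or.inl (Or.inl h)
          · exact Or.inr (Or.inl h)
          · exact Or.inl (Or.inr h)
        · rintro ((h | h) | (h | h))
          · exact Or.inl h
          · exact Or.inr (Or.inr h)
          · exact Or.inr (Or.inl h)
          · exact Or.inr (Or.inr h)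
      rw [himg]
      exact hmem
    -- representatives of the two covers
    obtain ⟨e₁, ⟨y₁, hy₁, he₁, hP₁e⟩, hvis₁⟩ := P₁.2
    obtain ⟨e₂, ⟨y₂, hy₂, he₂, hP₂e⟩, hvis₂⟩ := P₂.2
    have hP₁x : P₁.1 = FamPrime (PbFam w.L w.R (compLeft σ) (compRight τ))
        (P₁.1 ∪ ⋃₀ (Subtype.val '' X)) e₁ :=
      hP₁e.trans (prime_retarget hy₁ hz₁ he₁ (by rw [← hP₁e]; exact Set.subset_union_left))
    have hP₂x : P₂.1 = FamPrime (PbFam w.L w.R (compLeft σ) (compRight τ))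
        (P₂.1 ∪ ⋃₀ (Subtype.val '' X)) e₂ :=
      hP₂e.trans (prime_retarget hy₂ hz₂ he₂ (by rw [← hP₂e]; exact Set.subset_union_left))
    have he₁x : e₁ ∈ P₁.1 ∪ ⋃₀ (Subtype.val '' X) :=
      Set.subset_union_left (by rw [hP₁e]; exact mem_famprime_self he₁)
    have he₂x : e₂ ∈ P₂.1 ∪ ⋃₀ (Subtype.val '' X) :=
      Set.subset_union_left (by rw [hP₂e]; exact mem_famprime_self he₂)
    by_cases hT : (Sum.inr ⁻¹' (Prod.snd '' (P₁.1 ∪ ⋃₀ (Subtype.val '' X)))) ∪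
        (Sum.inr ⁻¹' (Prod.snd '' (P₂.1 ∪ ⋃₀ (Subtype.val '' X)))) ∈ PT.Con
    · by_cases hS : (Sum.inl ⁻¹' (Prod.fst '' (P₁.1 ∪ ⋃₀ (Subtype.val '' X)))) ∪
          (Sum.inl ⁻¹' (Prod.fst '' (P₂.1 ∪ ⋃₀ (Subtype.val '' X)))) ∈ PS.Con
      · exact absurd (ctx.union_mem hz₁ hz₂ hS hT) hUnot
      · -- conflict within S
        obtain ⟨wset, sa, sb, hcova, hcovb, hbad', hau, hav, hbv, hbu⟩ :=
          cross_conflict PS.toES (ctx.Scfg hz₁) (ctx.Scfg hz₂) hS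
        obtain ⟨mS, hma, hmb⟩ := hstS.2 wset sa sb hcova hcovb hbad'
        have hμab : μS sa = μS sb := by
          rw [← hμSspec.eq_of_le hma, hμSspec.eq_of_le hmb]
        have hYT : Config PT.toES
            ((Sum.inr ⁻¹' (Prod.snd '' (P₁.1 ∪ ⋃₀ (Subtype.val '' X)))) ∪
             (Sum.inr ⁻¹' (Prod.snd '' (P₂.1 ∪ ⋃₀ (Subtype.val '' X))))) := by
          refine ⟨hT, ?_⟩
          rintro u (hu | hu) u' hle
          · exact Or.inl ((ctx.Tcfg hz₁).2 hu hle)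
          · exact Or.inr ((ctx.Tcfg hz₂).2 hu hle)
        obtain ⟨p_a, hpaz, hpa1⟩ := hau
        obtain ⟨p_b, hpbz, hpb1⟩ := hbv
        have hpaP : p_a ∈ P₁.1 := by
          rcases hpaz with h | h
          · exact h
          · exact absurd ⟨p_a, Or.inr h, hpa1⟩ hav
        have hpbP : p_b ∈ P₂.1 := by
          rcases hpbz with h | h
          · exact h
          · exact absurd ⟨p_b, Or.inr h, hpb1⟩ hbu
        obtain ⟨b₀, hσm, -⟩ := hσminF (μS sa) (hμSspec sa).2.1
        obtain ⟨q₁, hq₁, hq₁1⟩ := pb_partner1 hz₁ hpaz (l := Sum.inl (μS sa))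
          (by rw [hpa1]; exact (parES_le_inl w.hL).mpr (hμSspec sa).1)
        obtain ⟨q₂, hq₂, hq₂1⟩ := pb_partner1 hz₂ hpbz (l := Sum.inl (μS sa))
          (by rw [hpb1]; refine (parES_le_inl w.hL).mpr ?_; rw [hμab]; exact (hμSspec sb).1)
        obtain ⟨t₁, hq₁2, hτt₁⟩ : ∃ t₁, q₁.2 = Sum.inr t₁ ∧ τ t₁ = Sum.inl b₀ := by
          rcases pb_shape hz₁ hq₁ with ⟨s₁, a₁, g1, g2, g3⟩ | ⟨s₁, t₁, b₁, g1, g2, g3, g4⟩ |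
            ⟨c₁, t₁, g1, g2, g3⟩
          · exfalso
            rw [hq₁1] at g1
            have : s₁ = μS sa := (Sum.inl.inj g1).symm
            rw [this, hσm] at g3; cases g3
          · rw [hq₁1] at g1
            have hs1 : s₁ = μS sa := (Sum.inl.inj g1).symm
            rw [hs1, hσm] at g3
            have : b₁ = b₀ := (Sum.inr.inj g3).symm
            exact ⟨t₁, g2, this ▸ g4⟩
          · rw [hq₁1] at g1; cases g1
        obtain ⟨t₂, hq₂2, hτt₂⟩ : ∃ t₂, q₂.2 = Sum.inr t₂ ∧ τ t₂ = Sum.inl b₀ := by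
          rcases pb_shape hz₂ hq₂ with ⟨s₁, a₁, g1, g2, g3⟩ | ⟨s₁, t₁, b₁, g1, g2, g3, g4⟩ |
            ⟨c₁, t₁, g1, g2, g3⟩
          · exfalso
            rw [hq₂1] at g1
            have : s₁ = μS sa := (Sum.inl.inj g1).symm
            rw [this, hσm] at g3; cases g3
          · rw [hq₂1] at g1
            have hs1 : s₁ = μS sa := (Sum.inl.inj g1).symm
            rw [hs1, hσm] at g3
            have : b₁ = b₀ := (Sum.inr.inj g3).symm
            exact ⟨t₁, g2, this ▸ g4⟩
          · rw [hq₂1] at g1; cases g1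
        have htt : t₁ = t₂ := ctx.hτinj _ hYT t₁ (Or.inl ⟨q₁, hq₁, hq₁2⟩)
          t₂ (Or.inr ⟨q₂, hq₂, hq₂2⟩) (by rw [hτt₁, hτt₂])
        obtain ⟨k₁, c₁, hk₁min, hk₁rtg, hk₁1, hk₁2, hk₁c⟩ := ctx.t_origin hμTspec hz₁ hq₁ hq₁2
        obtain ⟨k₂, c₂, hk₂min, hk₂rtg, hk₂1, hk₂2, hk₂c⟩ := ctx.t_origin hμTspec hz₂ hq₂ hq₂2
        have hμt : μT t₁ = μT t₂ := by rw [htt]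
        have hcc : c₁ = c₂ := Sum.inr.inj ((hμt ▸ hk₁c).symm.trans hk₂c)
        have hkeq : k₁ = k₂ := Prod.ext (by rw [hk₁1, hk₂1, hcc])
          (by rw [hk₁2, hk₂2, hμt])
        have hrtg₁ : Relation.ReflTransGen
            (StepST PS.toES PT.toES (P₁.1 ∪ ⋃₀ (Subtype.val '' X))) k₁ e₁ := by
          have h1 : Relation.ReflTransGen
              (StepST PS.toES PT.toES (P₁.1 ∪ ⋃₀ (Subtype.val '' X))) q₁ p_a := by
            by_cases he : q₁ = p_a
            · exact he ▸ Relation.ReflTransGen.refl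
            · exact Relation.ReflTransGen.single
                ⟨hq₁, hpaz, he, Or.inl ⟨μS sa, sa, hq₁1, hpa1, (hμSspec sa).1⟩⟩
          have hmem : p_a ∈ FamPrime (PbFam w.L w.R (compLeft σ) (compRight τ))
              (P₁.1 ∪ ⋃₀ (Subtype.val '' X)) e₁ := by rw [← hP₁x]; exact hpaP
          have h2 := ctx.rtg_step_of_cstep hz₁ (rtg_of_famle hz₁ hpaz he₁x hmem.2)
          exact (hk₁rtg.trans h1).trans h2
        have hrtg₂ : Relation.ReflTransGen
            (StepST PS.toES PT.toES (P₂.1 ∪ ⋃₀ (Subtype.val '' X))) k₂ e₂ := by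
          have h1 : Relation.ReflTransGen
              (StepST PS.toES PT.toES (P₂.1 ∪ ⋃₀ (Subtype.val '' X))) q₂ p_b := by
            by_cases he : q₂ = p_b
            · exact he ▸ Relation.ReflTransGen.refl
            · refine Relation.ReflTransGen.single
                ⟨hq₂, hpbz, he, Or.inl ⟨μS sa, sb, hq₂1, hpb1, ?_⟩⟩
              rw [hμab]
              exact (hμSspec sb).1
          have hmem : p_b ∈ FamPrime (PbFam w.L w.R (compLeft σ) (compRight τ))
              (P₂.1 ∪ ⋃₀ (Subtype.val '' X)) e₂ := by rw [← hP₂x]; exact hpbP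
          have h2 := ctx.rtg_step_of_cstep hz₂ (rtg_of_famle hz₂ hpbz he₂x hmem.2)
          exact (hk₂rtg.trans h1).trans h2
        have hm₁ := hmk hz₁ hk₁min
        refine ⟨⟨{k₁}, hm₁⟩, ?_, ?_⟩
        · rw [w.hle]
          intro u hu
          have huk : u = k₁ := hu
          rw [huk]
          show k₁ ∈ P₁.1
          rw [hP₁x]
          exact ⟨hk₁min.1, famle_of_rtg hz₁ (ctx.rtg_cstep_of_step hrtg₁)⟩
        · rw [w.hle]
          intro u hu
          have huk : u = k₁ := hu
          rw [huk]
          show k₁ ∈ P₂.1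
          rw [hP₂x, hkeq]
          exact ⟨hk₂min.1, famle_of_rtg hz₂ (ctx.rtg_cstep_of_step hrtg₂)⟩
    · -- conflict within T
      obtain ⟨wset, ta, tb, hcova, hcovb, hbad', hau, hav, hbv, hbu⟩ :=
        cross_conflict PT.toES (ctx.Tcfg hz₁) (ctx.Tcfg hz₂) hT
      obtain ⟨mT, hma, hmb⟩ := hstT.2 wset ta tb hcova hcovb hbad'
      have hμab : μT ta = μT tb := by
        rw [← hμTspec.eq_of_le hma, hμTspec.eq_of_le hmb]
      obtain ⟨p_a, hpaz, hpa2⟩ := hau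
      obtain ⟨p_b, hpbz, hpb2⟩ := hbv
      have hpaP : p_a ∈ P₁.1 := by
        rcases hpaz with h | h
        · exact h
        · exact absurd ⟨p_a, Or.inr h, hpa2⟩ hav
      have hpbP : p_b ∈ P₂.1 := by
        rcases hpbz with h | h
        · exact h
        · exact absurd ⟨p_b, Or.inr h, hpb2⟩ hbu
      obtain ⟨k₁, c₁, hk₁min, hk₁rtg, hk₁1, hk₁2, hk₁c⟩ := ctx.t_origin hμTspec hz₁ hpaz hpa2
      obtain ⟨k₂, c₂, hk₂min, hk₂rtg, hk₂1, hk₂2, hk₂c⟩ := ctx.t_origin hμTspec hz₂ hpbz hpb2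
      have hcc : c₁ = c₂ := Sum.inr.inj ((hμab ▸ hk₁c).symm.trans hk₂c)
      have hkeq : k₁ = k₂ := Prod.ext (by rw [hk₁1, hk₂1, hcc])
        (by rw [hk₁2, hk₂2, hμab])
      have hrtg₁ : Relation.ReflTransGen
          (StepST PS.toES PT.toES (P₁.1 ∪ ⋃₀ (Subtype.val '' X))) k₁ e₁ := by
        have hmem : p_a ∈ FamPrime (PbFam w.L w.R (compLeft σ) (compRight τ))
            (P₁.1 ∪ ⋃₀ (Subtype.val '' X)) e₁ := by rw [← hP₁x]; exact hpaP
        have h2 := ctx.rtg_step_of_cstep hz₁ (rtg_of_famle hz₁ hpaz he₁x hmem.2)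
        exact hk₁rtg.trans h2
      have hrtg₂ : Relation.ReflTransGen
          (StepST PS.toES PT.toES (P₂.1 ∪ ⋃₀ (Subtype.val '' X))) k₂ e₂ := by
        have hmem : p_b ∈ FamPrime (PbFam w.L w.R (compLeft σ) (compRight τ))
            (P₂.1 ∪ ⋃₀ (Subtype.val '' X)) e₂ := by rw [← hP₂x]; exact hpbP
        have h2 := ctx.rtg_step_of_cstep hz₂ (rtg_of_famle hz₂ hpbz he₂x hmem.2)
        exact hk₂rtg.trans h2
      have hm₁ := hmk hz₁ hk₁min
      refine ⟨⟨{k₁}, hm₁⟩, ?_, ?_⟩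
      · rw [w.hle]
        intro u hu
        have huk : u = k₁ := hu
        rw [huk]
        show k₁ ∈ P₁.1
        rw [hP₁x]
        exact ⟨hk₁min.1, famle_of_rtg hz₁ (ctx.rtg_cstep_of_step hrtg₁)⟩
      · rw [w.hle]
        intro u hu
        have huk : u = k₁ := hu
        rw [huk]
        show k₁ ∈ P₂.1
        rw [hP₂x, hkeq]
        exact ⟨hk₂min.1, famle_of_rtg hz₂ (ctx.rtg_cstep_of_step hrtg₂)⟩
end

section
/- Let A be a conflict-free esp (every finite subset of A is consistent), and let σ : S → A and τ : T → A^⊥ be strategies (receptive courteous maps of esps) that are deterministic, i.e. every finite subset of S (respectively of T) is consistent. Then every finite subset of the pullback S ⊛ T (taken forgetting polarities) is consistent. -/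
set_option autoImplicit false
set_option maxHeartbeats 1000000

universe u

variable {E F G H : Type u}

section Statement19Aux

variable {SE TE AE : Type u} {SP : ESP SE} {TP : ESP TE}
  {σ : SE → AE} {τ : TE → AE}

private lemma config_union' {A : ES E} (hcf : ConflictFree A) {x y : Set E}
    (hx : Config A x) (hy : Config A y) : Config A (x ∪ y) := by
  refine ⟨hcf _ ((A.con_finite _ hx.1).union (A.con_finite _ hy.1)), ?_⟩
  rintro e (he | he) e' hle
  · exact Or.inl (hx.2 he hle)
  · exact Or.inr (hy.2 he hle)

private lemma pb_dc1 {x : Set (SE × TE)} (hx : x ∈ PbFam SP.toES TP.toES σ τ)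
    {s s' : SE} {t : TE} (hmem : (s, t) ∈ x) (hle : SP.le s' s) :
    ∃ t', (s', t') ∈ x ∧ FamLe (PbFam SP.toES TP.toES σ τ) x (s', t') (s, t) := by
  obtain ⟨⟨hfin, hc1, hc2, hinj1, hinj2, hcf⟩, hst⟩ := hx
  obtain ⟨⟨s₁, t'⟩, hxt', hfst⟩ := hc1.2 ⟨(s, t), hmem, rfl⟩ hle
  cases hfst
  refine ⟨t', hxt', ?_⟩
  intro y hy hsub hmy
  obtain ⟨⟨_, hyc1, _, _, _, _⟩, _⟩ := hy
  obtain ⟨⟨s₂, t''⟩, hyt'', hfst2⟩ := hyc1.2 ⟨(s, t), hmy, rfl⟩ hle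
  have heq := hinj1 _ (hsub hyt'') _ hxt' hfst2
  rwa [heq] at hyt''

private lemma pb_dc2 {x : Set (SE × TE)} (hx : x ∈ PbFam SP.toES TP.toES σ τ)
    {t t' : TE} {s : SE} (hmem : (s, t) ∈ x) (hle : TP.le t' t) :
    ∃ s', (s', t') ∈ x ∧ FamLe (PbFam SP.toES TP.toES σ τ) x (s', t') (s, t) := by
  obtain ⟨⟨hfin, hc1, hc2, hinj1, hinj2, hcf⟩, hst⟩ := hx
  obtain ⟨⟨s', t₁⟩, hxt', hfst⟩ := hc2.2 ⟨(s, t), hmem, rfl⟩ hle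
  cases hfst
  refine ⟨s', hxt', ?_⟩
  intro y hy hsub hmy
  obtain ⟨⟨_, _, hyc2, _, _, _⟩, _⟩ := hy
  obtain ⟨⟨s₂, t₂⟩, hyt'', hfst2⟩ := hyc2.2 ⟨(s, t), hmy, rfl⟩ hle
  have heq := hinj2 _ (hsub hyt'') _ hxt' hfst2
  rwa [heq] at hyt''

private lemma pb_prime_proj1 (hdS : ConflictFree SP.toES)
    {x : Set (SE × TE)} (hx : x ∈ PbFam SP.toES TP.toES σ τ) {e : SE × TE} :
    Config SP.toES (Prod.fst '' FamPrime (PbFam SP.toES TP.toES σ τ) x e) := by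
  constructor
  · exact hdS _ ((hx.1.1.subset (fun a ha => ha.1)).image _)
  · rintro s ⟨⟨s₀, t⟩, ⟨hmx, hfl⟩, rfl⟩ s' hle
    obtain ⟨t', hxt', hft⟩ := pb_dc1 hx hmx hle
    exact ⟨(s', t'), ⟨hxt', fun y hy hsub hm => hft y hy hsub (hfl y hy hsub hm)⟩, rfl⟩

private lemma pb_prime_proj2 (hdT : ConflictFree TP.toES)
    {x : Set (SE × TE)} (hx : x ∈ PbFam SP.toES TP.toES σ τ) {e : SE × TE} :
    Config TP.toES (Prod.snd '' FamPrime (PbFam SP.toES TP.toES σ τ) x e) := by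
  constructor
  · exact hdT _ ((hx.1.1.subset (fun a ha => ha.1)).image _)
  · rintro t ⟨⟨s, t₀⟩, ⟨hmx, hfl⟩, rfl⟩ t' hle
    obtain ⟨s', hxt', hft⟩ := pb_dc2 hx hmx hle
    exact ⟨(s', t'), ⟨hxt', fun y hy hsub hm => hft y hy hsub (hfl y hy hsub hm)⟩, rfl⟩

private lemma pb_prime_mem (hdS : ConflictFree SP.toES) (hdT : ConflictFree TP.toES)
    {p : Set (SE × TE)} (hp : IsPrime (PbFam SP.toES TP.toES σ τ) p) :
    p ∈ PbFam SP.toES TP.toES σ τ := by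
  obtain ⟨x, hx, e, he, rfl⟩ := hp
  have hsub : FamPrime (PbFam SP.toES TP.toES σ τ) x e ⊆ x := fun a ha => ha.1
  obtain ⟨hfin, hc1, hc2, hinj1, hinj2, hcf⟩ := hx.1
  refine ⟨⟨hfin.subset hsub, pb_prime_proj1 hdS hx, pb_prime_proj2 hdT hx,
    fun a ha b hb h => hinj1 a (hsub ha) b (hsub hb) h,
    fun a ha b hb h => hinj2 a (hsub ha) b (hsub hb) h, ?_⟩,
    fun q hq => hx.2 q (hsub hq)⟩
  intro a ha b hb hne
  obtain ⟨y, hysub, hyc1, hyc2, hiff⟩ := hcf a (hsub ha) b (hsub hb) hne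
  refine ⟨y ∩ FamPrime (PbFam SP.toES TP.toES σ τ) x e, Set.inter_subset_right, ?_, ?_, ?_⟩
  · constructor
    · exact hdS _ ((hfin.subset (Set.inter_subset_left.trans hysub)).image _)
    · rintro s ⟨⟨s₀, t⟩, ⟨hay, hap⟩, rfl⟩ s' hle
      obtain ⟨⟨s₁, t₁⟩, h1y, hf1⟩ := hyc1.2 ⟨(s₀, t), hay, rfl⟩ hle
      obtain ⟨⟨s₂, t₂⟩, h2p, hf2⟩ := (pb_prime_proj1 hdS hx (e := e)).2 ⟨(s₀, t), hap, rfl⟩ hle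
      have heq : ((s₁, t₁) : SE × TE) = (s₂, t₂) :=
        hinj1 _ (hysub h1y) _ (hsub h2p) (hf1.trans hf2.symm)
      exact ⟨(s₁, t₁), ⟨h1y, heq ▸ h2p⟩, hf1⟩
  · constructor
    · exact hdT _ ((hfin.subset (Set.inter_subset_left.trans hysub)).image _)
    · rintro t ⟨⟨s, t₀⟩, ⟨hay, hap⟩, rfl⟩ t' hle
      obtain ⟨⟨s₁, t₁⟩, h1y, hf1⟩ := hyc2.2 ⟨(s, t₀), hay, rfl⟩ hle
      obtain ⟨⟨s₂, t₂⟩, h2p, hf2⟩ := (pb_prime_proj2 hdT hx (e := e)).2 ⟨(s, t₀), hap, rfl⟩ hle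
      have heq : ((s₁, t₁) : SE × TE) = (s₂, t₂) :=
        hinj2 _ (hysub h1y) _ (hsub h2p) (hf1.trans hf2.symm)
      exact ⟨(s₁, t₁), ⟨h1y, heq ▸ h2p⟩, hf1⟩
  · constructor
    · rintro ⟨hay, -⟩ ⟨hby, -⟩
      exact hiff.1 hay hby
    · intro h
      exact ⟨hiff.2 (fun hby => h ⟨hby, hb⟩), ha⟩

private lemma pb_union (hdS : ConflictFree SP.toES) (hdT : ConflictFree TP.toES)
    (hσi : ∀ x, Config SP.toES x → ∀ e ∈ x, ∀ e' ∈ x, σ e = σ e' → e = e')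
    (hτi : ∀ x, Config TP.toES x → ∀ e ∈ x, ∀ e' ∈ x, τ e = τ e' → e = e')
    {Z : Set (Set (SE × TE))} (hZfin : Z.Finite)
    (hZ : ∀ p ∈ Z, p ∈ PbFam SP.toES TP.toES σ τ) :
    ⋃₀ Z ∈ PbFam SP.toES TP.toES σ τ := by
  have hUfin : (⋃₀ Z).Finite := hZfin.sUnion (fun p hp => (hZ p hp).1.1)
  refine ⟨⟨hUfin, ⟨hdS _ (hUfin.image _), ?_⟩, ⟨hdT _ (hUfin.image _), ?_⟩, ?_, ?_, ?_⟩, ?_⟩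
  · rintro s ⟨⟨s₀, t⟩, ⟨p, hpZ, hmp⟩, rfl⟩ s' hle
    obtain ⟨a, hap, heq⟩ := ((hZ p hpZ).1.2.1).2 ⟨(s₀, t), hmp, rfl⟩ hle
    exact ⟨a, ⟨p, hpZ, hap⟩, heq⟩
  · rintro t ⟨⟨s, t₀⟩, ⟨p, hpZ, hmp⟩, rfl⟩ t' hle
    obtain ⟨a, hap, heq⟩ := ((hZ p hpZ).1.2.2.1).2 ⟨(s, t₀), hmp, rfl⟩ hle
    exact ⟨a, ⟨p, hpZ, hap⟩, heq⟩
  · rintro ⟨s, t⟩ ⟨p, hpZ, hmp⟩ ⟨s₂, t₂⟩ ⟨q, hqZ, hmq⟩ h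
    cases h
    have e1 : σ s = τ t := (hZ p hpZ).2 _ hmp
    have e2 : σ s = τ t₂ := (hZ q hqZ).2 _ hmq
    have hy : Config TP.toES (Prod.snd '' p ∪ Prod.snd '' q) :=
      config_union' hdT (hZ p hpZ).1.2.2.1 (hZ q hqZ).1.2.2.1
    have : t = t₂ := hτi _ hy t (Or.inl ⟨(s, t), hmp, rfl⟩) t₂ (Or.inr ⟨(s, t₂), hmq, rfl⟩)
      (e1.symm.trans e2)
    rw [this]
  · rintro ⟨s, t⟩ ⟨p, hpZ, hmp⟩ ⟨s₂, t₂⟩ ⟨q, hqZ, hmq⟩ h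
    cases h
    have e1 : σ s = τ t := (hZ p hpZ).2 _ hmp
    have e2 : σ s₂ = τ t := (hZ q hqZ).2 _ hmq
    have hy : Config SP.toES (Prod.fst '' p ∪ Prod.fst '' q) :=
      config_union' hdS (hZ p hpZ).1.2.1 (hZ q hqZ).1.2.1
    have : s = s₂ := hσi _ hy s (Or.inl ⟨(s, t), hmp, rfl⟩) s₂ (Or.inr ⟨(s₂, t), hmq, rfl⟩)
      (e1.trans e2.symm)
    rw [this]
  · rintro a ⟨p, hpZ, hap⟩ b ⟨q, hqZ, hbq⟩ hne
    by_cases hbp : b ∈ p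
    · obtain ⟨y, hysub, hy1, hy2, hiff⟩ := (hZ p hpZ).1.2.2.2.2.2 a hap b hbp hne
      exact ⟨y, hysub.trans (Set.subset_sUnion_of_mem hpZ), hy1, hy2, hiff⟩
    · exact ⟨p, Set.subset_sUnion_of_mem hpZ, (hZ p hpZ).1.2.1, (hZ p hpZ).1.2.2.1,
        iff_of_true hap hbp⟩
  · rintro q ⟨p, hpZ, hqp⟩
    exact (hZ p hpZ).2 _ hqp

end Statement19Aux

/-- the pullback of deterministic strategies on a conflict-free esp
has every finite subset of events consistent. -/
theorem statement19 {SE TE AE : Type u} (SP : ESP SE) (TP : ESP TE) (AP : ESP AE)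
    (hAcf : ConflictFree AP.toES)
    (σ : SE → AE) (τ : TE → AE)
    (hσ : IsESPMap SP AP σ) (hσr : Receptive SP AP σ) (hσc : Courteous SP AP σ)
    (hτ : IsESPMap TP AP.dual τ) (hτr : Receptive TP AP.dual τ) (hτc : Courteous TP AP.dual τ)
    (hdS : ConflictFree SP.toES) (hdT : ConflictFree TP.toES) :
    ∀ Z : Set (Set (SE × TE)), Z.Finite →
      (∀ p ∈ Z, IsPrime (PbFam SP.toES TP.toES σ τ) p) →
      ⋃₀ Z ∈ PbFam SP.toES TP.toES σ τ := by
  intro Z hZfin hprime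
  exact pb_union hdS hdT hσ.1.2 hτ.1.2 hZfin (fun p hp => pb_prime_mem hdS hdT (hprime p hp))
end
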